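/- arXiv:2107.03514 — 8 statements merged into one kernel-verified Lean document; each statement's English description precedes it below -/
import Mathlib

section
/- Let n ≥ 2 and 1 ≤ k ≤ n be integers and set l_k = ((n-k)/n)^(1/k). Then there exists a twice continuously differentiable function f : ℝ → ℝ, defined for all t ∈ ℝ, satisfying the ODE k·f''(t)/(f(t)^(k-1)·(1-f'(t)²)^(k/2+1)) + (n-k)/(f(t)^k·(1-f'(t)²)^(k/2)) = n for all t, with the following properties: (1) 0 < f'(t) < 1 and f''(t) > 0 for all t ∈ ℝ; (2) lim_{t→-∞} f(t) = l_k; (3) max{l_k, t} < f(t) < √(1+t²) for all t; (4) there exist constants C > 0 and T > 0, depending only on n and k, such that |f(t) - √(1+t²)| < C·t^(-n-1) whenever t > T. -/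
/-!
Along a profile with `0 < f' < 1` write `(1 - f'²)^{k/2} = h(f)`. As a function of the height `x`,
`h` then solves the Bernoulli equation `-x h' + (n - k) h = n x^k h²`, which is solved by
`h(x) = A x^{n-k} / (1 + A x^n)` for every constant `A`. For the `A` with `h(l_k) = 1`, the point
`l_k` is also a critical point of `h`. The profile solves the autonomous equation `f' = g(f)`,
`g = √(1 - h^{2/k})`, so it is the inverse of `τ(x) = ∫₁ˣ ds / g(s)` on `(l_k, ∞)`, shifted.
Because `h'(l_k) = 0`, `g` vanishes only linearly at `l_k`, hence `τ → -∞` there: `f` is defined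
on all of `ℝ` and tends to `l_k` at `-∞`. For large `x`, `1 / g(x) = x / √(x² - 1) + O(x^{-n-2})`,
so `τ(x) - √(x² - 1)` decreases to a limit `c` at rate `O(x^{-n-1})`; shifting by `c` puts `f`
below the hyperbola `√(1 + t²)` within `O(t^{-n-1})`, while `g < 1` keeps it above the line `t`.
-/

open Filter Real

/-- `lk n k = ((n-k)/n)^(1/k)`. -/
noncomputable def lk (n k : ℕ) : ℝ := (((n : ℝ) - k) / n) ^ ((1 : ℝ) / k)

/-- An admissible semitrough profile for `(n, k)`: a `C²` function `f : ℝ → ℝ`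
satisfying the constant `σ_k` curvature ODE together with the qualitative
properties (1)–(4). -/
def IsAdmissibleProfile (n k : ℕ) (f : ℝ → ℝ) : Prop :=
  ContDiff ℝ 2 f ∧
  (∀ t : ℝ,
      (k : ℝ) * deriv (deriv f) t /
          (f t ^ (k - 1) * (1 - deriv f t ^ 2) ^ ((k : ℝ) / 2 + 1)) +
        ((n : ℝ) - k) / (f t ^ k * (1 - deriv f t ^ 2) ^ ((k : ℝ) / 2)) = n) ∧
  (∀ t : ℝ, 0 < deriv f t ∧ deriv f t < 1 ∧ 0 < deriv (deriv f) t) ∧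
  Tendsto f atBot (nhds (lk n k)) ∧
  (∀ t : ℝ, max (lk n k) t < f t ∧ f t < Real.sqrt (1 + t ^ 2)) ∧
  (∃ C > (0 : ℝ), ∃ T > (0 : ℝ), ∀ t > T,
      |f t - Real.sqrt (1 + t ^ 2)| < C * t ^ (-(n : ℝ) - 1))

open Set Topology

section General

theorem contDiff_of_deriv_eq_comp {f g : ℝ → ℝ} {s : Set ℝ} (hf : Differentiable ℝ f)
    (hfg : deriv f = g ∘ f) (hs : ∀ t, f t ∈ s) :
    ∀ m : ℕ, ContDiffOn ℝ m g s → ContDiff ℝ (m + 1) f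
  | 0, hg => by
    rw [Nat.cast_zero, zero_add, contDiff_one_iff_deriv, hfg]
    exact ⟨hf, hg.continuousOn.comp_continuous hf.continuous hs⟩
  | m + 1, hg => by
    rw [contDiff_succ_iff_deriv, hfg]
    refine ⟨hf, by simp, hg.comp_contDiff ?_ hs⟩
    exact_mod_cast contDiff_of_deriv_eq_comp hf hfg hs m (hg.of_le (by norm_cast; omega))

theorem one_sub_rpow_two_div_le {y : ℝ} {k : ℕ} (hy0 : 0 ≤ y) (hy1 : y ≤ 1) (hk : 1 ≤ k) :
    1 - y ^ ((2 : ℝ) / k) ≤ 2 * (1 - y) := by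
  have hk' : (1 : ℝ) ≤ k := by exact_mod_cast hk
  have : y ^ (2 : ℝ) ≤ y ^ ((2 : ℝ) / k) :=
    rpow_le_rpow_of_exponent_ge' hy0 hy1 (by positivity) (div_le_self zero_le_two hk')
  rw [rpow_two] at this
  nlinarith

theorem inv_sub_inv_le_four_mul_sq_sub_sq {a b : ℝ} (ha : 1 / 2 ≤ a) (hab : a ≤ b) :
    a⁻¹ - b⁻¹ ≤ 4 * (b ^ 2 - a ^ 2) := by
  have ha0 : 0 < a := by linarith
  have hb0 : 0 < b := ha0.trans_le hab
  have hprod : 1 ≤ 4 * (a + b) * (a * b) := by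
    nlinarith [mul_le_mul ha (ha.trans hab) (by norm_num) ha0.le]
  rw [inv_sub_inv ha0.ne' hb0.ne', div_le_iff₀ (mul_pos ha0 hb0)]
  nlinarith [mul_le_mul_of_nonneg_left hprod (sub_nonneg.2 hab)]

theorem sqrt_one_add_sq_sub_lt {x t : ℝ} (hx : 1 ≤ x) (ht : √(x ^ 2 - 1) < t) :
    √(1 + t ^ 2) - x < t - √(x ^ 2 - 1) := by
  set s := √(x ^ 2 - 1)
  have hs : s ^ 2 = x ^ 2 - 1 := sq_sqrt (by nlinarith)
  have hs0 : 0 ≤ s := sqrt_nonneg _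
  have hsx : s < x := by nlinarith
  rw [sub_lt_iff_lt_add', ← add_sub_assoc, sqrt_lt' (by linarith)]
  nlinarith [mul_pos (sub_pos.2 ht) (sub_pos.2 hsx)]

theorem mem_lowerBounds_image_Ici {φ ψ : ℝ → ℝ} {a b x : ℝ} (hφ : AntitoneOn φ (Ici a))
    (hψ : MonotoneOn ψ (Ici b)) (hψφ : ∀ y ∈ Ici b, ψ y ≤ φ y) (hab : a ≤ b) (hx : b ≤ x) :
    ψ x ∈ lowerBounds (φ '' Ici a) := by
  rintro _ ⟨y, hy, rfl⟩
  rcases le_total x y with hxy | hyx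
  · exact (hψ hx (hx.trans hxy) hxy).trans (hψφ y (hx.trans hxy))
  · exact (hψφ x hx).trans (hφ hy (hab.trans hx) hyx)

end General

namespace Semitrough

noncomputable def h (A : ℝ) (n k : ℕ) (x : ℝ) : ℝ := A * x ^ (n - k) / (1 + A * x ^ n)

noncomputable def hDeriv (A : ℝ) (n k : ℕ) (x : ℝ) : ℝ :=
  h A n k x * ((n - k) - k * A * x ^ n) / (x * (1 + A * x ^ n))

section FirstIntegral

variable {A x : ℝ} {n k : ℕ}

theorem h_pos (hA : 0 < A) (hx : 0 < x) : 0 < h A n k x := by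
  unfold h; positivity

theorem pow_mul_h (hkn : k ≤ n) : x ^ k * h A n k x = A * x ^ n / (1 + A * x ^ n) := by
  rw [h, mul_div_assoc', mul_left_comm, ← pow_add, Nat.add_sub_cancel' hkn]

theorem pow_mul_h_lt_one (hkn : k ≤ n) (hA : 0 < A) (hx : 0 < x) : x ^ k * h A n k x < 1 := by
  rw [pow_mul_h hkn, div_lt_one (by positivity)]
  linarith

theorem one_sub_pow_mul_h_le (hkn : k ≤ n) (hA : 0 < A) (hx : 0 < x) :
    1 - x ^ k * h A n k x ≤ 1 / (A * x ^ n) := by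
  have : 0 < A * x ^ n := by positivity
  rw [pow_mul_h hkn, one_sub_div (by positivity), add_sub_cancel_right]
  exact div_le_div_of_nonneg_left zero_le_one this (by linarith)

theorem continuousOn_h (hA : 0 ≤ A) : ContinuousOn (h A n k) (Ici 0) :=
  ContinuousOn.div (by fun_prop) (by fun_prop) fun x (hx : 0 ≤ x) ↦ by positivity

theorem hasDerivAt_h (hkn : k ≤ n) (hA : 0 ≤ A) (hx : 0 < x) :
    HasDerivAt (h A n k) (hDeriv A n k x) x := by
  have hpow : ∀ m : ℕ, (m : ℝ) * x ^ (m - 1) = m * x ^ m / x := by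
    rintro (_ | m)
    · simp
    · rw [Nat.add_sub_cancel, pow_succ, mul_div_assoc, mul_div_cancel_right₀ _ hx.ne']
  have hD : 1 + A * x ^ n ≠ 0 := by positivity
  have H := ((hasDerivAt_pow (n - k) x).const_mul A).fun_div
    (((hasDerivAt_pow n x).const_mul A).const_add 1) hD
  refine H.congr_deriv ?_
  rw [hDeriv, h, hpow, hpow, Nat.cast_sub hkn]
  field_simp
  ring

theorem hDeriv_first_integral (hkn : k ≤ n) (hA : 0 ≤ A) (hx : 0 < x) :
    -x * hDeriv A n k x + (n - k) * h A n k x = n * x ^ k * h A n k x ^ 2 := by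
  have hD : 1 + A * x ^ n ≠ 0 := by positivity
  have hxh : x ^ k * h A n k x * (1 + A * x ^ n) = A * x ^ n := by
    rw [pow_mul_h hkn, div_mul_cancel₀ _ hD]
  rw [hDeriv]
  field_simp
  linear_combination (-(n : ℝ) * h A n k x) * hxh

end FirstIntegral

/-- The `A` with `h A n k (lk n k) = 1`. -/
noncomputable def coeff (n k : ℕ) : ℝ := n / (k * lk n k ^ (n - k))

section Coeff

variable {n k : ℕ} {x : ℝ}

theorem lk_nonneg (hkn : k ≤ n) : 0 ≤ lk n k :=
  rpow_nonneg (div_nonneg (sub_nonneg.2 (by exact_mod_cast hkn)) n.cast_nonneg) _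

theorem lk_lt_one (hk1 : 1 ≤ k) (hkn : k ≤ n) : lk n k < 1 := by
  have hk : (0 : ℝ) < k := by exact_mod_cast hk1
  have hn : (0 : ℝ) < n := Nat.cast_pos.2 (by omega)
  refine rpow_lt_one (div_nonneg (sub_nonneg.2 (by exact_mod_cast hkn)) hn.le) ?_ (by positivity)
  rw [div_lt_one hn]
  linarith

theorem lk_pow (hk1 : 1 ≤ k) (hkn : k ≤ n) : lk n k ^ k = (n - k) / n := by
  rw [lk, ← rpow_natCast, ← rpow_mul (div_nonneg (sub_nonneg.2 (by exact_mod_cast hkn))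
    n.cast_nonneg), one_div_mul_cancel (Nat.cast_ne_zero.2 (by omega)), rpow_one]

theorem lk_pow_sub_pos (hk1 : 1 ≤ k) (hkn : k ≤ n) : 0 < lk n k ^ (n - k) := by
  rcases hkn.eq_or_lt with rfl | hlt
  · simp
  · have hn : (0 : ℝ) < n := Nat.cast_pos.2 (by omega)
    exact pow_pos (rpow_pos_of_pos (div_pos (sub_pos.2 (by exact_mod_cast hlt)) hn) _) _

theorem coeff_pos (hk1 : 1 ≤ k) (hkn : k ≤ n) : 0 < coeff n k := by
  have := lk_pow_sub_pos hk1 hkn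
  have : (0 : ℝ) < n := Nat.cast_pos.2 (by omega)
  unfold coeff; positivity

theorem coeff_mul_lk_pow_sub (hk1 : 1 ≤ k) (hkn : k ≤ n) :
    coeff n k * lk n k ^ (n - k) = n / k := by
  rw [coeff, div_mul_eq_mul_div, mul_comm (k : ℝ), ← div_div, mul_div_assoc,
    div_self (lk_pow_sub_pos hk1 hkn).ne', mul_one]

theorem mul_coeff_mul_lk_pow (hk1 : 1 ≤ k) (hkn : k ≤ n) :
    k * coeff n k * lk n k ^ n = n - k := by
  have hk : (k : ℝ) ≠ 0 := Nat.cast_ne_zero.2 (by omega)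
  have hn : (n : ℝ) ≠ 0 := Nat.cast_ne_zero.2 (by omega)
  calc k * coeff n k * lk n k ^ n = k * (coeff n k * lk n k ^ (n - k)) * lk n k ^ k := by
        rw [mul_assoc, mul_assoc, mul_assoc, ← pow_add, Nat.sub_add_cancel hkn]
    _ = n - k := by
        rw [coeff_mul_lk_pow_sub hk1 hkn, lk_pow hk1 hkn]
        field_simp

theorem h_lk (hk1 : 1 ≤ k) (hkn : k ≤ n) : h (coeff n k) n k (lk n k) = 1 := by
  have hk : (k : ℝ) ≠ 0 := Nat.cast_ne_zero.2 (by omega)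
  have hA := coeff_pos hk1 hkn
  have hL := lk_nonneg hkn
  have := mul_coeff_mul_lk_pow hk1 hkn
  rw [h, coeff_mul_lk_pow_sub hk1 hkn, div_eq_one_iff_eq (by positivity)]
  field_simp
  linarith

theorem hDeriv_neg (hk1 : 1 ≤ k) (hkn : k ≤ n) (hx : lk n k < x) :
    hDeriv (coeff n k) n k x < 0 := by
  have hA := coeff_pos hk1 hkn
  have hx0 := (lk_nonneg hkn).trans_lt hx
  have hk : (0 : ℝ) < k := by exact_mod_cast hk1
  have hpow : lk n k ^ n < x ^ n := pow_lt_pow_left₀ hx (lk_nonneg hkn) (by omega)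
  have hfac : (n - k : ℝ) - k * coeff n k * x ^ n < 0 := by
    rw [← mul_coeff_mul_lk_pow hk1 hkn, sub_neg]
    exact mul_lt_mul_of_pos_left hpow (by positivity)
  exact div_neg_of_neg_of_pos (mul_neg_of_pos_of_neg (h_pos hA hx0) hfac) (by positivity)

theorem strictAntiOn_h (hk1 : 1 ≤ k) (hkn : k ≤ n) :
    StrictAntiOn (h (coeff n k) n k) (Ici (lk n k)) := by
  refine strictAntiOn_of_hasDerivWithinAt_neg (f' := hDeriv (coeff n k) n k) (convex_Ici _)
    ((continuousOn_h (coeff_pos hk1 hkn).le).mono (Ici_subset_Ici.2 (lk_nonneg hkn)))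
    (fun x hx ↦ ?_) fun x hx ↦ ?_
  all_goals rw [interior_Ici] at hx
  · exact (hasDerivAt_h hkn (coeff_pos hk1 hkn).le
      ((lk_nonneg hkn).trans_lt hx)).hasDerivWithinAt
  · exact hDeriv_neg hk1 hkn hx

theorem h_lt_one (hk1 : 1 ≤ k) (hkn : k ≤ n) (hx : lk n k < x) : h (coeff n k) n k x < 1 :=
  h_lk hk1 hkn ▸ strictAntiOn_h hk1 hkn self_mem_Ici hx.le hx

theorem h_pos_of_lk_lt (hk1 : 1 ≤ k) (hkn : k ≤ n) (hx : lk n k < x) :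
    0 < h (coeff n k) n k x :=
  h_pos (coeff_pos hk1 hkn) ((lk_nonneg hkn).trans_lt hx)

theorem neg_hDeriv_le (hn : 2 ≤ n) (hk1 : 1 ≤ k) (hkn : k ≤ n) (hx : lk n k < x)
    (hx1 : x ≤ 1) : -hDeriv (coeff n k) n k x ≤ n * k * coeff n k * (x - lk n k) := by
  have hA := coeff_pos hk1 hkn
  have hL := lk_nonneg hkn
  have hx0 := hL.trans_lt hx
  have hk : (0 : ℝ) < k := by exact_mod_cast hk1
  have hpow : x ^ n - lk n k ^ n ≤ n * (x - lk n k) * x := by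
    have h1 := abs_pow_sub_pow_le x (lk n k) n
    rw [abs_of_nonneg (sub_nonneg.2 (pow_le_pow_left₀ hL hx.le n)), abs_of_pos (sub_pos.2 hx),
      max_eq_left (abs_le_abs_of_nonneg hL hx.le), abs_of_pos hx0] at h1
    have h2 : x ^ (n - 1) ≤ x := pow_le_of_le_one hx0.le hx1 (by omega)
    nlinarith [mul_le_mul_of_nonneg_left h2 (mul_nonneg (sub_nonneg.2 hx.le) n.cast_nonneg)]
  have hD : 0 < x * (1 + coeff n k * x ^ n) := by positivity
  have hnum : -(h (coeff n k) n k x * ((n - k) - k * coeff n k * x ^ n)) =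
      h (coeff n k) n k x * (k * coeff n k * (x ^ n - lk n k ^ n)) := by
    rw [← mul_coeff_mul_lk_pow hk1 hkn]; ring
  rw [hDeriv, ← neg_div, hnum, div_le_iff₀ hD]
  have hkA : 0 ≤ k * coeff n k * (x ^ n - lk n k ^ n) :=
    mul_nonneg (by positivity) (sub_nonneg.2 (pow_le_pow_left₀ hL hx.le n))
  calc h (coeff n k) n k x * (k * coeff n k * (x ^ n - lk n k ^ n))
      ≤ 1 * (k * coeff n k * (n * (x - lk n k) * x)) :=
        mul_le_mul (h_lt_one hk1 hkn hx).le (mul_le_mul_of_nonneg_left hpow (by positivity)) hkA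
          zero_le_one
    _ ≤ n * k * coeff n k * (x - lk n k) * (x * (1 + coeff n k * x ^ n)) := by
        have : 0 ≤ n * k * coeff n k * (x - lk n k) * x := by
          have := sub_nonneg.2 hx.le; positivity
        nlinarith [mul_nonneg this (by positivity : 0 ≤ coeff n k * x ^ n)]

theorem one_sub_h_le (hn : 2 ≤ n) (hk1 : 1 ≤ k) (hkn : k ≤ n) (hx : lk n k ≤ x) (hx1 : x ≤ 1) :
    1 - h (coeff n k) n k x ≤ n * k * coeff n k / 2 * (x - lk n k) ^ 2 := by
  set M := n * k * coeff n k
  have hmono : MonotoneOn (fun y ↦ h (coeff n k) n k y + M / 2 * (y - lk n k) ^ 2)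
      (Icc (lk n k) 1) := by
    refine monotoneOn_of_hasDerivWithinAt_nonneg (convex_Icc _ _)
      (f' := fun y ↦ hDeriv (coeff n k) n k y + M * (y - lk n k)) ?_ (fun y hy ↦ ?_)
      fun y hy ↦ ?_
    · exact ((continuousOn_h (coeff_pos hk1 hkn).le).mono
        fun y hy ↦ (lk_nonneg hkn).trans hy.1).add (by fun_prop)
    all_goals rw [interior_Icc] at hy
    · have hder := (hasDerivAt_h hkn (coeff_pos hk1 hkn).le
        ((lk_nonneg hkn).trans_lt hy.1)).fun_add
        ((((hasDerivAt_id' y).sub_const (lk n k)).fun_pow 2).const_mul (M / 2))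
      exact (hder.congr_deriv (by push_cast; ring)).hasDerivWithinAt
    · linarith [neg_hDeriv_le hn hk1 hkn hy.1 hy.2.le]
  have := hmono ⟨le_rfl, (lk_lt_one hk1 hkn).le⟩ ⟨hx, hx1⟩ hx
  simp only [sub_self, h_lk hk1 hkn] at this
  linarith

end Coeff

noncomputable def slope (n k : ℕ) (x : ℝ) : ℝ := √(1 - h (coeff n k) n k x ^ ((2 : ℝ) / k))

noncomputable def slopeDeriv (n k : ℕ) (x : ℝ) : ℝ :=
  -(h (coeff n k) n k x ^ ((2 : ℝ) / k - 1) * hDeriv (coeff n k) n k x) / (k * slope n k x)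

section Slope

variable {n k : ℕ} {x : ℝ}

theorem rpow_h_lt_one (hk1 : 1 ≤ k) (hkn : k ≤ n) (hx : lk n k < x) :
    h (coeff n k) n k x ^ ((2 : ℝ) / k) < 1 :=
  rpow_lt_one (h_pos_of_lk_lt hk1 hkn hx).le (h_lt_one hk1 hkn hx) (by positivity)

theorem sq_slope (hk1 : 1 ≤ k) (hkn : k ≤ n) (hx : lk n k < x) :
    slope n k x ^ 2 = 1 - h (coeff n k) n k x ^ ((2 : ℝ) / k) :=
  sq_sqrt (sub_nonneg.2 (rpow_h_lt_one hk1 hkn hx).le)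

theorem slope_pos (hk1 : 1 ≤ k) (hkn : k ≤ n) (hx : lk n k < x) : 0 < slope n k x :=
  sqrt_pos.2 (sub_pos.2 (rpow_h_lt_one hk1 hkn hx))

theorem slope_lt_one (hk1 : 1 ≤ k) (hkn : k ≤ n) (hx : lk n k < x) : slope n k x < 1 :=
  (sqrt_lt' one_pos).2 (by linarith [rpow_pos_of_pos (h_pos_of_lk_lt hk1 hkn hx) ((2 : ℝ) / k)])

theorem slope_le (hn : 2 ≤ n) (hk1 : 1 ≤ k) (hkn : k ≤ n) (hx : lk n k < x) (hx1 : x ≤ 1) :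
    slope n k x ≤ √(n * k * coeff n k) * (x - lk n k) := by
  have hh := h_pos_of_lk_lt hk1 hkn hx
  have h1 := one_sub_rpow_two_div_le hh.le (h_lt_one hk1 hkn hx).le hk1
  have h2 := one_sub_h_le hn hk1 hkn hx.le hx1
  rw [← sqrt_sq (sub_nonneg.2 hx.le), ← sqrt_mul (by have := coeff_pos hk1 hkn; positivity)]
  exact sqrt_le_sqrt (by linarith)

theorem sq_mul_rpow_h (hk1 : 1 ≤ k) (hkn : k ≤ n) (hx : lk n k < x) :
    x ^ 2 * h (coeff n k) n k x ^ ((2 : ℝ) / k) =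
      (x ^ k * h (coeff n k) n k x) ^ ((2 : ℝ) / k) := by
  have hx0 := (lk_nonneg hkn).trans_lt hx
  rw [mul_rpow (by positivity) (h_pos_of_lk_lt hk1 hkn hx).le, ← rpow_natCast x k,
    ← rpow_mul hx0.le, mul_div_cancel₀ _ (Nat.cast_ne_zero.2 (by omega)), rpow_two]

theorem sq_sub_one_lt_sq_mul_sq_slope (hk1 : 1 ≤ k) (hkn : k ≤ n) (hx : lk n k < x) :
    x ^ 2 - 1 < x ^ 2 * slope n k x ^ 2 := by
  have hx0 := (lk_nonneg hkn).trans_lt hx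
  have hxh := pow_mul_h_lt_one (A := coeff n k) hkn (coeff_pos hk1 hkn) hx0
  have : (x ^ k * h (coeff n k) n k x) ^ ((2 : ℝ) / k) < 1 :=
    rpow_lt_one (by have := h_pos_of_lk_lt hk1 hkn hx; positivity) hxh (by positivity)
  rw [sq_slope hk1 hkn hx, mul_one_sub, sq_mul_rpow_h hk1 hkn hx]
  linarith

theorem sq_mul_sq_slope_le (hk1 : 1 ≤ k) (hkn : k ≤ n) (hx : lk n k < x) :
    x ^ 2 * slope n k x ^ 2 ≤ x ^ 2 - 1 + 2 / (coeff n k * x ^ n) := by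
  have hx0 := (lk_nonneg hkn).trans_lt hx
  have hA := coeff_pos hk1 hkn
  have hxh := pow_mul_h_lt_one (A := coeff n k) hkn hA hx0
  have h1 := one_sub_rpow_two_div_le (by have := h_pos_of_lk_lt hk1 hkn hx; positivity)
    hxh.le hk1
  have h2 := one_sub_pow_mul_h_le (A := coeff n k) (k := k) hkn hA hx0
  rw [sq_slope hk1 hkn hx, mul_one_sub, sq_mul_rpow_h hk1 hkn hx]
  have : 2 / (coeff n k * x ^ n) = 2 * (1 / (coeff n k * x ^ n)) := by ring
  linarith

theorem sqrt_sq_sub_one_lt_mul_slope (hk1 : 1 ≤ k) (hkn : k ≤ n) (hx : lk n k < x) :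
    √(x ^ 2 - 1) < x * slope n k x := by
  have hx0 := (lk_nonneg hkn).trans_lt hx
  rw [sqrt_lt' (mul_pos hx0 (slope_pos hk1 hkn hx)), mul_pow]
  exact sq_sub_one_lt_sq_mul_sq_slope hk1 hkn hx

theorem contDiffOn_slope (hk1 : 1 ≤ k) (hkn : k ≤ n) {m : WithTop ℕ∞} :
    ContDiffOn ℝ m (slope n k) (Ioi (lk n k)) := by
  intro x (hx : lk n k < x)
  have hA := coeff_pos hk1 hkn
  have hx0 := (lk_nonneg hkn).trans_lt hx
  refine ContDiffAt.contDiffWithinAt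
    (ContDiffAt.sqrt ?_ (sub_pos.2 (rpow_h_lt_one hk1 hkn hx)).ne')
  refine contDiffAt_const.sub (ContDiffAt.rpow_const_of_ne ?_ (h_pos_of_lk_lt hk1 hkn hx).ne')
  exact ContDiffAt.div (by fun_prop) (by fun_prop) (by positivity)

theorem hasDerivAt_slope (hk1 : 1 ≤ k) (hkn : k ≤ n) (hx : lk n k < x) :
    HasDerivAt (slope n k) (slopeDeriv n k x) x := by
  have hh := h_pos_of_lk_lt hk1 hkn hx
  have hk : (k : ℝ) ≠ 0 := Nat.cast_ne_zero.2 (by omega)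
  have hder := (((hasDerivAt_h hkn (coeff_pos hk1 hkn).le ((lk_nonneg hkn).trans_lt hx)).rpow_const
    (p := (2 : ℝ) / k) (Or.inl hh.ne')).const_sub 1).sqrt
    (sub_pos.2 (rpow_h_lt_one hk1 hkn hx)).ne'
  refine hder.congr_deriv ?_
  rw [slopeDeriv, ← slope]
  field_simp

theorem slopeDeriv_pos (hk1 : 1 ≤ k) (hkn : k ≤ n) (hx : lk n k < x) : 0 < slopeDeriv n k x :=
  div_pos (neg_pos.2 (mul_neg_of_pos_of_neg (rpow_pos_of_pos (h_pos_of_lk_lt hk1 hkn hx) _)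
    (hDeriv_neg hk1 hkn hx))) (mul_pos (by exact_mod_cast hk1) (slope_pos hk1 hkn hx))

end Slope

noncomputable def time (n k : ℕ) (x : ℝ) : ℝ := ∫ s in (1 : ℝ)..x, (slope n k s)⁻¹

section Time

variable {n k : ℕ} {x : ℝ}

theorem continuousOn_inv_slope (hk1 : 1 ≤ k) (hkn : k ≤ n) :
    ContinuousOn (fun s ↦ (slope n k s)⁻¹) (Ioi (lk n k)) :=
  (contDiffOn_slope hk1 hkn (m := 0)).continuousOn.inv₀ fun _ hs ↦ (slope_pos hk1 hkn hs).ne'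

theorem hasDerivAt_time (hk1 : 1 ≤ k) (hkn : k ≤ n) (hx : lk n k < x) :
    HasDerivAt (time n k) (slope n k x)⁻¹ x := by
  have hcont := continuousOn_inv_slope hk1 hkn
  refine intervalIntegral.integral_hasDerivAt_right ?_
    (hcont.stronglyMeasurableAtFilter isOpen_Ioi x hx) (hcont.continuousAt (Ioi_mem_nhds hx))
  refine (hcont.mono fun s hs ↦ ?_).intervalIntegrable
  rcases mem_uIcc.1 hs with hs | hs
  · exact (lk_lt_one hk1 hkn).trans_le hs.1
  · exact hx.trans_le hs.1

theorem continuousOn_time (hk1 : 1 ≤ k) (hkn : k ≤ n) :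
    ContinuousOn (time n k) (Ioi (lk n k)) :=
  HasDerivAt.continuousOn fun _ hx ↦ hasDerivAt_time hk1 hkn hx

theorem strictMonoOn_time (hk1 : 1 ≤ k) (hkn : k ≤ n) :
    StrictMonoOn (time n k) (Ioi (lk n k)) := by
  refine strictMonoOn_of_deriv_pos (convex_Ioi _) (continuousOn_time hk1 hkn) fun x hx ↦ ?_
  rw [interior_Ioi] at hx
  rw [(hasDerivAt_time hk1 hkn hx).deriv]
  exact inv_pos.2 (slope_pos hk1 hkn hx)

theorem strictMonoOn_time_sub_id (hk1 : 1 ≤ k) (hkn : k ≤ n) :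
    StrictMonoOn (fun x ↦ time n k x - x) (Ioi (lk n k)) := by
  refine strictMonoOn_of_deriv_pos (convex_Ioi _)
    ((continuousOn_time hk1 hkn).sub continuousOn_id) fun x hx ↦ ?_
  rw [interior_Ioi] at hx
  rw [((hasDerivAt_time hk1 hkn hx).fun_sub (hasDerivAt_id' x)).deriv, sub_pos]
  exact (one_lt_inv₀ (slope_pos hk1 hkn hx)).2 (slope_lt_one hk1 hkn hx)

theorem tendsto_time_nhdsGT (hn : 2 ≤ n) (hk1 : 1 ≤ k) (hkn : k ≤ n) :
    Tendsto (time n k) (𝓝[>] (lk n k)) atBot := by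
  set L := lk n k
  set c := (√(n * k * coeff n k))⁻¹
  have hL1 : L < 1 := lk_lt_one hk1 hkn
  have hc : 0 < c := inv_pos.2 (sqrt_pos.2 (by have := coeff_pos hk1 hkn; positivity))
  have hderiv : ∀ x ∈ Ioi L, HasDerivAt (fun y ↦ time n k y - c * log (y - L))
      ((slope n k x)⁻¹ - c * (x - L)⁻¹) x :=
    fun x hx ↦ (hasDerivAt_time hk1 hkn hx).sub
      ((((hasDerivAt_id' x).sub_const L).log (sub_pos.2 hx).ne').const_mul c |>.congr_deriv
        (by simp [div_eq_mul_inv]))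
  have hmono : MonotoneOn (fun y ↦ time n k y - c * log (y - L)) (Ioc L 1) := by
    refine monotoneOn_of_hasDerivWithinAt_nonneg (convex_Ioc _ _)
      (f' := fun x ↦ (slope n k x)⁻¹ - c * (x - L)⁻¹)
      (HasDerivAt.continuousOn fun x hx ↦ hderiv x hx.1) (fun x hx ↦ ?_) fun x hx ↦ ?_
    all_goals rw [interior_Ioc] at hx
    · exact (hderiv x hx.1).hasDerivWithinAt
    · rw [sub_nonneg, ← mul_inv]
      exact inv_anti₀ (slope_pos hk1 hkn hx.1) (slope_le hn hk1 hkn hx.1 hx.2.le)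
  have hbound : ∀ x ∈ Ioc L 1, time n k x ≤ time n k 1 - c * log (1 - L) + c * log (x - L) :=
    fun x hx ↦ by linarith [hmono hx ⟨hL1, le_rfl⟩ hx.2]
  have hlog : Tendsto (fun x ↦ log (x - L)) (𝓝[>] L) atBot := by
    refine tendsto_log_nhdsGT_zero.comp (tendsto_nhdsWithin_iff.2 ⟨?_, ?_⟩)
    · simpa using ((continuous_sub_right L).tendsto L).mono_left nhdsWithin_le_nhds
    · exact eventually_nhdsWithin_of_forall fun x hx ↦ mem_Ioi.2 (sub_pos.2 hx)
  refine tendsto_atBot_mono' _ ?_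
    (tendsto_atBot_add_const_left _ (time n k 1 - c * log (1 - L)) (hlog.const_mul_atBot hc))
  filter_upwards [Ioc_mem_nhdsGT hL1] with x hx using hbound x hx

theorem tendsto_time_atTop (hk1 : 1 ≤ k) (hkn : k ≤ n) : Tendsto (time n k) atTop atTop := by
  refine tendsto_atTop_mono' _ ?_ (tendsto_atTop_add_const_right _ (-1) tendsto_id)
  filter_upwards [eventually_ge_atTop 1] with x hx
  have hL1 := lk_lt_one hk1 hkn
  have := (strictMonoOn_time_sub_id hk1 hkn).monotoneOn hL1 (hL1.trans_le hx) hx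
  simp only [time, intervalIntegral.integral_same, id] at this ⊢
  linarith

theorem surjOn_time (hn : 2 ≤ n) (hk1 : 1 ≤ k) (hkn : k ≤ n) :
    SurjOn (time n k) (Ioi (lk n k)) univ := by
  refine (continuousOn_time hk1 hkn).surjOn_of_tendsto nonempty_Ioi ?_
    (tendsto_comp_val_Ioi_atTop.2 (tendsto_time_atTop hk1 hkn))
  exact tendsto_map'_iff.1 (map_coe_Ioi_atBot (lk n k) ▸ tendsto_time_nhdsGT hn hk1 hkn)

end Time

/-- `time n k x - √(x² - 1)` decreases to this limit as `x → ∞`. -/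
noncomputable def shift (n k : ℕ) : ℝ := sInf ((fun x ↦ time n k x - √(x ^ 2 - 1)) '' Ici 1)

noncomputable def decayConst (n k : ℕ) : ℝ := 8 / (coeff n k * (n + 1))

section Shift

variable {n k : ℕ} {x : ℝ}

theorem decayConst_pos (hk1 : 1 ≤ k) (hkn : k ≤ n) : 0 < decayConst n k := by
  have := coeff_pos hk1 hkn
  unfold decayConst; positivity

theorem hasDerivAt_sqrt_sq_sub_one (hx : 1 < x) :
    HasDerivAt (fun y ↦ √(y ^ 2 - 1)) (x / √(x ^ 2 - 1)) x := by
  have hpos : 0 < x ^ 2 - 1 := by nlinarith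
  refine (((hasDerivAt_pow 2 x).sub_const 1).sqrt hpos.ne').congr_deriv ?_
  field_simp
  ring

theorem strictAntiOn_time_sub_sqrt (hk1 : 1 ≤ k) (hkn : k ≤ n) :
    StrictAntiOn (fun x ↦ time n k x - √(x ^ 2 - 1)) (Ici 1) := by
  have hL1 := lk_lt_one hk1 hkn
  refine strictAntiOn_of_deriv_neg (convex_Ici _) (((continuousOn_time hk1 hkn).mono
    fun x (hx : 1 ≤ x) ↦ hL1.trans_le hx).sub (by fun_prop)) fun x hx ↦ ?_
  rw [interior_Ici] at hx
  have hxL : lk n k < x := hL1.trans hx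
  rw [((hasDerivAt_time hk1 hkn hxL).fun_sub (hasDerivAt_sqrt_sq_sub_one hx)).deriv, sub_neg,
    lt_div_iff₀ (sqrt_pos.2 (by nlinarith [mem_Ioi.1 hx])),
    inv_mul_lt_iff₀ (slope_pos hk1 hkn hxL), mul_comm]
  exact sqrt_sq_sub_one_lt_mul_slope hk1 hkn hxL

theorem div_sqrt_sub_inv_slope_le (hk1 : 1 ≤ k) (hkn : k ≤ n) (hx : 2 ≤ x) :
    x / √(x ^ 2 - 1) - (slope n k x)⁻¹ ≤ 8 / (coeff n k * x ^ (n + 2)) := by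
  have hxL : lk n k < x := (lk_lt_one hk1 hkn).trans_le (by linarith)
  have hx0 : 0 < x := by linarith
  have hA := coeff_pos hk1 hkn
  have hpos : 0 < x ^ 2 - 1 := by nlinarith
  set G := √(x ^ 2 - 1) / x
  have hG2 : G ^ 2 = (x ^ 2 - 1) / x ^ 2 := by rw [div_pow, sq_sqrt hpos.le]
  have hG : 1 / 2 ≤ G := by
    rw [le_div_iff₀ hx0, le_sqrt (by positivity) hpos.le]
    nlinarith
  have hGs : G ≤ slope n k x := by
    rw [div_le_iff₀ hx0, mul_comm]
    exact (sqrt_sq_sub_one_lt_mul_slope hk1 hkn hxL).le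
  have hdiff : slope n k x ^ 2 - G ^ 2 ≤ 2 / (coeff n k * x ^ n) / x ^ 2 := by
    rw [hG2, le_div_iff₀ (by positivity), sub_mul, div_mul_cancel₀ _ (by positivity)]
    linarith [sq_mul_sq_slope_le hk1 hkn hxL]
  calc x / √(x ^ 2 - 1) - (slope n k x)⁻¹ = G⁻¹ - (slope n k x)⁻¹ := by rw [inv_div]
    _ ≤ 4 * (slope n k x ^ 2 - G ^ 2) := inv_sub_inv_le_four_mul_sq_sub_sq hG hGs
    _ ≤ 4 * (2 / (coeff n k * x ^ n) / x ^ 2) := by gcongr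
    _ = 8 / (coeff n k * x ^ (n + 2)) := by rw [pow_add]; field_simp; ring

theorem monotoneOn_time_sub_sqrt_sub (hk1 : 1 ≤ k) (hkn : k ≤ n) :
    MonotoneOn (fun x ↦ time n k x - √(x ^ 2 - 1) - decayConst n k * (x ^ (n + 1))⁻¹)
      (Ici 2) := by
  have hL1 := lk_lt_one hk1 hkn
  have hA := coeff_pos hk1 hkn
  have hderiv : ∀ x ∈ Ioi (1 : ℝ), HasDerivAt
      (fun x ↦ time n k x - √(x ^ 2 - 1) - decayConst n k * (x ^ (n + 1))⁻¹)
      ((slope n k x)⁻¹ - x / √(x ^ 2 - 1) + 8 / (coeff n k * x ^ (n + 2))) x := by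
    intro x (hx : 1 < x)
    have hx0 : x ≠ 0 := by positivity
    refine (((hasDerivAt_time hk1 hkn (hL1.trans hx)).fun_sub
      (hasDerivAt_sqrt_sq_sub_one hx)).fun_sub
      (((hasDerivAt_pow (n + 1) x).inv (pow_ne_zero _ hx0)).const_mul _)).congr_deriv ?_
    rw [decayConst]
    push_cast
    field_simp
    ring
  refine monotoneOn_of_hasDerivWithinAt_nonneg (convex_Ici _)
    (f' := fun x ↦ (slope n k x)⁻¹ - x / √(x ^ 2 - 1) + 8 / (coeff n k * x ^ (n + 2)))
    (HasDerivAt.continuousOn fun x (hx : 2 ≤ x) ↦ hderiv x (mem_Ioi.2 (by linarith)))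
    (fun x hx ↦ ?_) fun x hx ↦ ?_
  all_goals rw [interior_Ici] at hx
  · exact (hderiv x (mem_Ioi.2 (by linarith [mem_Ioi.1 hx]))).hasDerivWithinAt
  · linarith [div_sqrt_sub_inv_slope_le hk1 hkn (mem_Ioi.1 hx).le]

theorem time_sub_sqrt_sub_mem_lowerBounds (hk1 : 1 ≤ k) (hkn : k ≤ n) (hx : 2 ≤ x) :
    time n k x - √(x ^ 2 - 1) - decayConst n k * (x ^ (n + 1))⁻¹ ∈
      lowerBounds ((fun x ↦ time n k x - √(x ^ 2 - 1)) '' Ici 1) := by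
  have hC := decayConst_pos hk1 hkn
  refine mem_lowerBounds_image_Ici
    (ψ := fun x ↦ time n k x - √(x ^ 2 - 1) - decayConst n k * (x ^ (n + 1))⁻¹)
    (strictAntiOn_time_sub_sqrt hk1 hkn).antitoneOn (monotoneOn_time_sub_sqrt_sub hk1 hkn)
    (fun y (hy : 2 ≤ y) ↦ sub_le_self _ ?_) one_le_two hx
  have : 0 < y := by linarith
  positivity

theorem le_shift (hk1 : 1 ≤ k) (hkn : k ≤ n) (hx : 2 ≤ x) :
    time n k x - √(x ^ 2 - 1) - decayConst n k * (x ^ (n + 1))⁻¹ ≤ shift n k :=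
  le_csInf (nonempty_Ici.image _) (time_sub_sqrt_sub_mem_lowerBounds hk1 hkn hx)

theorem shift_lt (hk1 : 1 ≤ k) (hkn : k ≤ n) (hx : 1 ≤ x) :
    shift n k < time n k x - √(x ^ 2 - 1) :=
  (csInf_le ⟨_, time_sub_sqrt_sub_mem_lowerBounds hk1 hkn le_rfl⟩
    (mem_image_of_mem _ (mem_Ici.2 (by linarith : (1 : ℝ) ≤ x + 1)))).trans_lt
    (strictAntiOn_time_sub_sqrt hk1 hkn hx (mem_Ici.2 (by linarith)) (lt_add_one x))

theorem time_sub_lt_shift (hk1 : 1 ≤ k) (hkn : k ≤ n) (hx : lk n k < x) :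
    time n k x - x < shift n k := by
  have hx0 := (lk_nonneg hkn).trans_lt hx
  have hmono := strictMonoOn_time_sub_id hk1 hkn
  refine (hmono hx (hx.trans (lt_add_one x)) (lt_add_one x)).trans_le (le_csInf
    (nonempty_Ici.image _) (mem_lowerBounds_image_Ici (ψ := fun x ↦ time n k x - x)
      (strictAntiOn_time_sub_sqrt hk1 hkn).antitoneOn
      (hmono.monotoneOn.mono fun y (hy : x + 1 ≤ y) ↦ hx.trans (by linarith))
      (fun y (hy : x + 1 ≤ y) ↦ ?_) (by linarith) le_rfl))
  exact sub_le_sub_left (sqrt_le_iff.2 ⟨by linarith, by linarith [sq_nonneg y]⟩) _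

end Shift

theorem sigma_k_lhs_eq_of_first_integral {n k : ℕ} (hk : k ≠ 0) {x H H' v a : ℝ} (hx : 0 < x)
    (hH : 0 < H) (hv : 1 - v ^ 2 = H ^ ((2 : ℝ) / k))
    (ha : k * a = -(H ^ ((2 : ℝ) / k - 1) * H'))
    (hint : -x * H' + (n - k) * H = n * x ^ k * H ^ 2) :
    k * a / (x ^ (k - 1) * (1 - v ^ 2) ^ ((k : ℝ) / 2 + 1)) +
      (n - k) / (x ^ k * (1 - v ^ 2) ^ ((k : ℝ) / 2)) = n := by
  have hk' : (k : ℝ) ≠ 0 := Nat.cast_ne_zero.2 hk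
  have hpow : (H ^ ((2 : ℝ) / k)) ^ ((k : ℝ) / 2) = H := by
    rw [← rpow_mul hH.le, div_mul_div_comm, mul_comm, div_self (by positivity), rpow_one]
  have hpow' : (H ^ ((2 : ℝ) / k)) ^ ((k : ℝ) / 2 + 1) = H * H ^ ((2 : ℝ) / k) := by
    rw [rpow_add (rpow_pos_of_pos hH _), hpow, rpow_one]
  have hxk : x ^ k = x ^ (k - 1) * x := by
    rw [← pow_succ, Nat.sub_add_cancel (Nat.pos_of_ne_zero hk)]
  rw [hv, ha, hpow, hpow', rpow_sub_one hH.ne', hxk]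
  rw [hxk] at hint
  field_simp
  linear_combination hint

noncomputable def profile (n k : ℕ) (t : ℝ) : ℝ :=
  Function.invFunOn (time n k) (Ioi (lk n k)) (t + shift n k)

section Profile

variable {n k : ℕ}

theorem lk_lt_profile (hn : 2 ≤ n) (hk1 : 1 ≤ k) (hkn : k ≤ n) (t : ℝ) :
    lk n k < profile n k t :=
  (surjOn_time hn hk1 hkn).mapsTo_invFunOn (mem_univ _)

theorem time_profile (hn : 2 ≤ n) (hk1 : 1 ≤ k) (hkn : k ≤ n) (t : ℝ) :
    time n k (profile n k t) = t + shift n k :=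
  (surjOn_time hn hk1 hkn).rightInvOn_invFunOn (mem_univ _)

theorem profile_time_sub_shift (hk1 : 1 ≤ k) (hkn : k ≤ n) {x : ℝ} (hx : lk n k < x) :
    profile n k (time n k x - shift n k) = x := by
  rw [profile, sub_add_cancel]
  exact (strictMonoOn_time hk1 hkn).injOn.leftInvOn_invFunOn hx

theorem range_profile (hn : 2 ≤ n) (hk1 : 1 ≤ k) (hkn : k ≤ n) :
    range (profile n k) = Ioi (lk n k) :=
  (range_subset_iff.2 (lk_lt_profile hn hk1 hkn)).antisymm
    fun _ hx ↦ ⟨_, profile_time_sub_shift hk1 hkn hx⟩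

theorem strictMono_profile (hn : 2 ≤ n) (hk1 : 1 ≤ k) (hkn : k ≤ n) :
    StrictMono (profile n k) := by
  intro a b hab
  by_contra! hba
  have := (strictMonoOn_time hk1 hkn).monotoneOn (lk_lt_profile hn hk1 hkn b)
    (lk_lt_profile hn hk1 hkn a) hba
  rw [time_profile hn hk1 hkn, time_profile hn hk1 hkn] at this
  linarith

theorem continuous_profile (hn : 2 ≤ n) (hk1 : 1 ≤ k) (hkn : k ≤ n) :
    Continuous (profile n k) :=
  continuous_iff_continuousAt.2 fun t ↦ continuousAt_of_monotoneOn_of_image_mem_nhds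
    ((strictMono_profile hn hk1 hkn).monotone.monotoneOn univ) univ_mem
    (by rw [image_univ, range_profile hn hk1 hkn]; exact Ioi_mem_nhds (lk_lt_profile hn hk1 hkn t))

theorem hasDerivAt_profile (hn : 2 ≤ n) (hk1 : 1 ≤ k) (hkn : k ≤ n) (t : ℝ) :
    HasDerivAt (profile n k) (slope n k (profile n k t)) t := by
  have hx := lk_lt_profile hn hk1 hkn t
  simpa using ((hasDerivAt_time hk1 hkn hx).sub_const (shift n k)).of_local_left_inverse
    (continuous_profile hn hk1 hkn).continuousAt (inv_ne_zero (slope_pos hk1 hkn hx).ne')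
    (Eventually.of_forall fun s ↦ by rw [time_profile hn hk1 hkn, add_sub_cancel_right])

theorem deriv_profile (hn : 2 ≤ n) (hk1 : 1 ≤ k) (hkn : k ≤ n) :
    deriv (profile n k) = slope n k ∘ profile n k :=
  funext fun t ↦ (hasDerivAt_profile hn hk1 hkn t).deriv

theorem hasDerivAt_deriv_profile (hn : 2 ≤ n) (hk1 : 1 ≤ k) (hkn : k ≤ n) (t : ℝ) :
    HasDerivAt (deriv (profile n k))
      (slopeDeriv n k (profile n k t) * slope n k (profile n k t)) t := by
  rw [deriv_profile hn hk1 hkn]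
  exact (hasDerivAt_slope hk1 hkn (lk_lt_profile hn hk1 hkn t)).comp t
    (hasDerivAt_profile hn hk1 hkn t)

theorem contDiff_profile (hn : 2 ≤ n) (hk1 : 1 ≤ k) (hkn : k ≤ n) :
    ContDiff ℝ 2 (profile n k) :=
  contDiff_of_deriv_eq_comp (fun t ↦ (hasDerivAt_profile hn hk1 hkn t).differentiableAt)
    (deriv_profile hn hk1 hkn) (lk_lt_profile hn hk1 hkn) 1 (contDiffOn_slope hk1 hkn)

theorem profile_sigma_k_equation (hn : 2 ≤ n) (hk1 : 1 ≤ k) (hkn : k ≤ n) (t : ℝ) :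
    (k : ℝ) * deriv (deriv (profile n k)) t /
        (profile n k t ^ (k - 1) * (1 - deriv (profile n k) t ^ 2) ^ ((k : ℝ) / 2 + 1)) +
      ((n : ℝ) - k) /
        (profile n k t ^ k * (1 - deriv (profile n k) t ^ 2) ^ ((k : ℝ) / 2)) = n := by
  have hx := lk_lt_profile hn hk1 hkn t
  have hx0 := (lk_nonneg hkn).trans_lt hx
  have hk : (k : ℝ) ≠ 0 := Nat.cast_ne_zero.2 (by omega)
  refine sigma_k_lhs_eq_of_first_integral (by omega) hx0 (h_pos_of_lk_lt hk1 hkn hx) ?_ ?_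
    (hDeriv_first_integral hkn (coeff_pos hk1 hkn).le hx0)
  · rw [(hasDerivAt_profile hn hk1 hkn t).deriv, sq_slope hk1 hkn hx, sub_sub_cancel]
  · rw [(hasDerivAt_deriv_profile hn hk1 hkn t).deriv, slopeDeriv]
    field_simp [(slope_pos hk1 hkn hx).ne']

theorem deriv_deriv_profile_pos (hn : 2 ≤ n) (hk1 : 1 ≤ k) (hkn : k ≤ n) (t : ℝ) :
    0 < deriv (deriv (profile n k)) t := by
  have hx := lk_lt_profile hn hk1 hkn t
  rw [(hasDerivAt_deriv_profile hn hk1 hkn t).deriv]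
  exact mul_pos (slopeDeriv_pos hk1 hkn hx) (slope_pos hk1 hkn hx)

theorem tendsto_profile_atBot (hn : 2 ≤ n) (hk1 : 1 ≤ k) (hkn : k ≤ n) :
    Tendsto (profile n k) atBot (𝓝 (lk n k)) := by
  have := tendsto_atBot_ciInf (strictMono_profile hn hk1 hkn).monotone
    (by rw [range_profile hn hk1 hkn]; exact bddBelow_Ioi)
  rwa [iInf, range_profile hn hk1 hkn, csInf_Ioi] at this

theorem lt_profile (hn : 2 ≤ n) (hk1 : 1 ≤ k) (hkn : k ≤ n) (t : ℝ) : t < profile n k t := by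
  have := time_sub_lt_shift hk1 hkn (lk_lt_profile hn hk1 hkn t)
  rw [time_profile hn hk1 hkn] at this
  linarith

theorem profile_lt_sqrt (hn : 2 ≤ n) (hk1 : 1 ≤ k) (hkn : k ≤ n) (t : ℝ) :
    profile n k t < √(1 + t ^ 2) := by
  set x := profile n k t
  rcases lt_or_ge x 1 with hx1 | hx1
  · exact hx1.trans_le (le_sqrt_of_sq_le (by nlinarith))
  · have := shift_lt hk1 hkn hx1
    rw [time_profile hn hk1 hkn] at this
    have hst : √(x ^ 2 - 1) < t := by linarith
    have ht : 0 < t := (sqrt_nonneg _).trans_lt hst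
    rw [sqrt_lt' ht] at hst
    rw [lt_sqrt (by linarith)]
    linarith

theorem abs_profile_sub_sqrt_lt (hn : 2 ≤ n) (hk1 : 1 ≤ k) (hkn : k ≤ n) {t : ℝ} (ht : 2 < t) :
    |profile n k t - √(1 + t ^ 2)| < decayConst n k * (t ^ (n + 1))⁻¹ := by
  set x := profile n k t
  have hxt := lt_profile hn hk1 hkn t
  have hC := decayConst_pos hk1 hkn
  have hupper := le_shift hk1 hkn (ht.trans hxt).le
  have hlower := shift_lt hk1 hkn (by linarith : 1 ≤ x)
  rw [time_profile hn hk1 hkn] at hupper hlower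
  have hdecay : (x ^ (n + 1))⁻¹ < (t ^ (n + 1))⁻¹ :=
    inv_strictAnti₀ (by positivity) (pow_lt_pow_left₀ hxt (by linarith) (by omega))
  have hgap := sqrt_one_add_sq_sub_lt (by linarith : 1 ≤ x) (by linarith : √(x ^ 2 - 1) < t)
  rw [abs_sub_comm, abs_of_pos (by linarith [profile_lt_sqrt hn hk1 hkn t])]
  nlinarith [mul_lt_mul_of_pos_left hdecay hC]

end Profile

end Semitrough

open Semitrough in
/-- Existence of an admissible semitrough profile for every `n ≥ 2` and `1 ≤ k ≤ n`. -/
theorem exists_semitrough_profile (n k : ℕ) (hn : 2 ≤ n) (hk1 : 1 ≤ k) (hkn : k ≤ n) :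
    ∃ f : ℝ → ℝ, IsAdmissibleProfile n k f := by
  refine ⟨profile n k, contDiff_profile hn hk1 hkn, profile_sigma_k_equation hn hk1 hkn,
    fun t ↦ ?_, tendsto_profile_atBot hn hk1 hkn,
    fun t ↦ ⟨max_lt (lk_lt_profile hn hk1 hkn t) (lt_profile hn hk1 hkn t),
      profile_lt_sqrt hn hk1 hkn t⟩,
    decayConst n k, decayConst_pos hk1 hkn, 2, two_pos, fun t ht ↦ ?_⟩
  · have hx := lk_lt_profile hn hk1 hkn t
    rw [(hasDerivAt_profile hn hk1 hkn t).deriv]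
    exact ⟨slope_pos hk1 hkn hx, slope_lt_one hk1 hkn hx, deriv_deriv_profile_pos hn hk1 hkn t⟩
  · have hpow : t ^ (-(n : ℝ) - 1) = (t ^ (n + 1))⁻¹ := by
      rw [← neg_add', rpow_neg (by linarith), ← Nat.cast_add_one, rpow_natCast]
    exact hpow ▸ abs_profile_sub_sqrt_lt hn hk1 hkn ht
end

section
/- Let n ≥ 2 and 1 ≤ k ≤ n be integers, let y₀ ∈ (0,1), let I ⊆ ℝ be an open interval containing 0, and let f : I → ℝ be twice continuously differentiable with f(t) > 0 and |f'(t)| < 1 for all t ∈ I, f(0) = y₀, f'(0) = 0, and satisfying k·f''(t)/(f(t)^(k-1)·(1-f'(t)²)^(k/2+1)) + (n-k)/(f(t)^k·(1-f'(t)²)^(k/2)) = n for all t ∈ I. Then for all t ∈ I one has the first-integral identity (1 - f'(t)²)^(-k/2) = f(t)^k + y₀^(n-k)·(1 - y₀^k)/f(t)^(n-k). -/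
/-!
Write `R = (1 - f'²)^(-k/2)`, so that `R' = k f' f'' (1 - f'²)^(-k/2-1)`. Multiplying the ODE
by `f' f^(n-1)` turns it into `(f^(n-k) R)' = (f^n)'`. Hence `f^(n-k) (R - f^k)` is constant on
the interval, and its value at `0` is `y₀^(n-k) (1 - y₀^k)` because `f'(0) = 0`.
-/

open Filter Real Set

theorem semitrough_ode_clear_denom {n k : ℕ} (hk : 1 ≤ k) {u w P : ℝ} (hu : u ≠ 0) (hP : 0 < P)
    (hODE : (k : ℝ) * w / (u ^ (k - 1) * P ^ ((k : ℝ) / 2 + 1)) +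
      ((n : ℝ) - k) / (u ^ k * P ^ ((k : ℝ) / 2)) = n) :
    k * w * u + (n - k) * P = n * u ^ k * P ^ ((k : ℝ) / 2) * P := by
  obtain ⟨j, rfl⟩ : ∃ j, k = j + 1 := ⟨k - 1, by omega⟩
  have hQ : P ^ (((j + 1 : ℕ) : ℝ) / 2) ≠ 0 := (rpow_pos_of_pos hP _).ne'
  rw [rpow_add_one hP.ne', Nat.add_sub_cancel, pow_succ] at hODE
  rw [pow_succ]
  field_simp at hODE
  linear_combination hODE

theorem semitrough_ode_first_integral_identity {n k : ℕ} (hk : 1 ≤ k) (hkn : k ≤ n)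
    {u v w P : ℝ} (hu : u ≠ 0) (hP : 0 < P)
    (hODE : (k : ℝ) * w / (u ^ (k - 1) * P ^ ((k : ℝ) / 2 + 1)) +
      ((n : ℝ) - k) / (u ^ k * P ^ ((k : ℝ) / 2)) = n) :
    ((n - k : ℕ) : ℝ) * u ^ (n - k - 1) * v * (P ^ (-(k : ℝ) / 2) - u ^ k) +
      u ^ (n - k) * (k * v * w * P ^ (-(k : ℝ) / 2 - 1) - k * u ^ (k - 1) * v) = 0 := by
  have hcleared := semitrough_ode_clear_denom hk hu hP hODE
  have hQ : 0 < P ^ ((k : ℝ) / 2) := rpow_pos_of_pos hP _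
  have hR : P ^ (-(k : ℝ) / 2) = (P ^ ((k : ℝ) / 2))⁻¹ := by rw [neg_div, rpow_neg hP.le]
  have hR' : P ^ (-(k : ℝ) / 2 - 1) = (P ^ ((k : ℝ) / 2) * P)⁻¹ := by
    rw [rpow_sub_one hP.ne', hR, div_eq_mul_inv, mul_inv]
  rw [hR, hR']
  generalize P ^ ((k : ℝ) / 2) = Q at hQ hcleared ⊢
  obtain ⟨j, rfl⟩ : ∃ j, k = j + 1 := ⟨k - 1, by omega⟩
  obtain ⟨m, rfl⟩ : ∃ m, n = j + 1 + m := ⟨n - (j + 1), by omega⟩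
  simp only [Nat.add_sub_cancel_left, Nat.add_sub_cancel] at hcleared ⊢
  push_cast at hcleared ⊢
  rcases m with _ | m
  · have hw : w = u ^ j * Q * P := by
      apply mul_left_cancel₀ (mul_ne_zero (by positivity : (j : ℝ) + 1 ≠ 0) hu)
      linear_combination hcleared
    subst hw
    field_simp
    ring
  · simp only [Nat.add_sub_cancel]
    field_simp
    linear_combination u ^ m * v * hcleared

noncomputable def semitroughFirstIntegral (n k : ℕ) (f : ℝ → ℝ) (t : ℝ) : ℝ :=
  f t ^ (n - k) * ((1 - deriv f t ^ 2) ^ (-(k : ℝ) / 2) - f t ^ k)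

theorem hasDerivAt_semitroughFirstIntegral {n k : ℕ} (hk : 1 ≤ k) (hkn : k ≤ n)
    {f : ℝ → ℝ} {t : ℝ}
    (hf : DifferentiableAt ℝ f t) (hf' : DifferentiableAt ℝ (deriv f) t) (hft : f t ≠ 0)
    (hslope : |deriv f t| < 1)
    (hODE : (k : ℝ) * deriv (deriv f) t /
          (f t ^ (k - 1) * (1 - deriv f t ^ 2) ^ ((k : ℝ) / 2 + 1)) +
        ((n : ℝ) - k) / (f t ^ k * (1 - deriv f t ^ 2) ^ ((k : ℝ) / 2)) = n) :
    HasDerivAt (semitroughFirstIntegral n k f) 0 t := by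
  have hP : 0 < 1 - deriv f t ^ 2 := by
    nlinarith [sq_abs (deriv f t), abs_nonneg (deriv f t)]
  have hR : HasDerivAt (fun s => (1 - deriv f s ^ 2) ^ (-(k : ℝ) / 2))
      (-(2 * deriv f t ^ 1 * deriv (deriv f) t) * (-(k : ℝ) / 2) *
        (1 - deriv f t ^ 2) ^ (-(k : ℝ) / 2 - 1)) t :=
    ((hf'.hasDerivAt.pow 2).const_sub 1).rpow_const (Or.inl hP.ne')
  have hder : HasDerivAt (semitroughFirstIntegral n k f)
      (((n - k : ℕ) : ℝ) * f t ^ (n - k - 1) * deriv f t *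
          ((1 - deriv f t ^ 2) ^ (-(k : ℝ) / 2) - f t ^ k) +
        f t ^ (n - k) * (-(2 * deriv f t ^ 1 * deriv (deriv f) t) * (-(k : ℝ) / 2) *
          (1 - deriv f t ^ 2) ^ (-(k : ℝ) / 2 - 1) - k * f t ^ (k - 1) * deriv f t)) t :=
    (hf.hasDerivAt.pow (n - k)).mul (hR.sub (hf.hasDerivAt.pow k))
  convert hder using 1
  linear_combination -semitrough_ode_first_integral_identity hk hkn (v := deriv f t) hft hP hODE

theorem semitrough_first_integral_general (n k : ℕ) (hk1 : 1 ≤ k) (hkn : k ≤ n)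
    (y₀ : ℝ)
    (a b : ℝ) (ha : a < 0) (hb : 0 < b)
    (f : ℝ → ℝ) (hf : ContDiffOn ℝ 2 f (Set.Ioo a b))
    (hfpos : ∀ t ∈ Set.Ioo a b, 0 < f t)
    (hfsp : ∀ t ∈ Set.Ioo a b, |deriv f t| < 1)
    (hf0 : f 0 = y₀) (hf'0 : deriv f 0 = 0)
    (hODE : ∀ t ∈ Set.Ioo a b,
      (k : ℝ) * deriv (deriv f) t /
          (f t ^ (k - 1) * (1 - deriv f t ^ 2) ^ ((k : ℝ) / 2 + 1)) +
        ((n : ℝ) - k) / (f t ^ k * (1 - deriv f t ^ 2) ^ ((k : ℝ) / 2)) = n) :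
    ∀ t ∈ Set.Ioo a b,
      (1 - deriv f t ^ 2) ^ (-(k : ℝ) / 2) =
        f t ^ k + y₀ ^ (n - k) * (1 - y₀ ^ k) / f t ^ (n - k) := by
  intro t ht
  have hdiff : ∀ s ∈ Ioo a b, DifferentiableAt ℝ f s := fun s hs =>
    (hf.differentiableOn (by norm_num)).differentiableAt (isOpen_Ioo.mem_nhds hs)
  have hdiff' : ∀ s ∈ Ioo a b, DifferentiableAt ℝ (deriv f) s := fun s hs =>
    ((hf.deriv_of_isOpen isOpen_Ioo (m := 1) (by norm_num)).differentiableOn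
      one_ne_zero).differentiableAt (isOpen_Ioo.mem_nhds hs)
  have hderiv : ∀ s ∈ Ioo a b, HasDerivAt (semitroughFirstIntegral n k f) 0 s := fun s hs =>
    hasDerivAt_semitroughFirstIntegral hk1 hkn (hdiff s hs) (hdiff' s hs) (hfpos s hs).ne'
      (hfsp s hs) (hODE s hs)
  have hconst : semitroughFirstIntegral n k f t = semitroughFirstIntegral n k f 0 :=
    isOpen_Ioo.is_const_of_deriv_eq_zero isPreconnected_Ioo
      (fun s hs => (hderiv s hs).differentiableAt.differentiableWithinAt)
      (fun s hs => (hderiv s hs).deriv) ht ⟨ha, hb⟩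
  simp only [semitroughFirstIntegral, hf0, hf'0, neg_div, ne_eq, OfNat.ofNat_ne_zero,
    not_false_eq_true, zero_pow, sub_zero, one_rpow] at hconst
  have hft : f t ^ (n - k) ≠ 0 := pow_ne_zero _ (hfpos t ht).ne'
  field_simp
  linear_combination hconst

/-- The first-integral identity for the semitrough ODE: if `f` solves the constant
`σ_k` curvature ODE on an open interval `(a, b)` containing `0`, with `f > 0`,
`|f'| < 1`, `f 0 = y₀ ∈ (0,1)` and `f' 0 = 0`, then
`(1 - f'(t)²)^(-k/2) = f(t)^k + y₀^(n-k) (1 - y₀^k) / f(t)^(n-k)` on `(a, b)`. -/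
theorem semitrough_first_integral (n k : ℕ) (hn : 2 ≤ n) (hk1 : 1 ≤ k) (hkn : k ≤ n)
    (y₀ : ℝ) (hy₀ : y₀ ∈ Set.Ioo (0 : ℝ) 1)
    (a b : ℝ) (ha : a < 0) (hb : 0 < b)
    (f : ℝ → ℝ) (hf : ContDiffOn ℝ 2 f (Set.Ioo a b))
    (hfpos : ∀ t ∈ Set.Ioo a b, 0 < f t)
    (hfsp : ∀ t ∈ Set.Ioo a b, |deriv f t| < 1)
    (hf0 : f 0 = y₀) (hf'0 : deriv f 0 = 0)
    (hODE : ∀ t ∈ Set.Ioo a b,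
      (k : ℝ) * deriv (deriv f) t /
          (f t ^ (k - 1) * (1 - deriv f t ^ 2) ^ ((k : ℝ) / 2 + 1)) +
        ((n : ℝ) - k) / (f t ^ k * (1 - deriv f t ^ 2) ^ ((k : ℝ) / 2)) = n) :
    ∀ t ∈ Set.Ioo a b,
      (1 - deriv f t ^ 2) ^ (-(k : ℝ) / 2) =
        f t ^ k + y₀ ^ (n - k) * (1 - y₀ ^ k) / f t ^ (n - k) :=
  semitrough_first_integral_general n k hk1 hkn y₀ a b ha hb f hf hfpos hfsp hf0 hf'0 hODE
end

section
/- Let n ≥ 2 and 1 ≤ k ≤ n be integers, let f be an admissible semitrough profile for (n,k), and let z(x) = √(f(x₁)² + |x̄|²). Then for every unit vector θ ∈ 𝕊^{n-1}: if θ = (-1, 0, …, 0) then lim_{r→∞} ( z(rθ) - V₊(rθ) ) = l_k, and for every other θ ∈ 𝕊^{n-1} one has lim_{r→∞} ( z(rθ) - V₊(rθ) ) = 0. -/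
open Filter Real

/-- The semitrough height function `z(x) = √(f(x₁)² + |x̄|²)`. -/
noncomputable def zfun (n : ℕ) [NeZero n] (f : ℝ → ℝ) (x : EuclideanSpace ℝ (Fin n)) : ℝ :=
  Real.sqrt (f (x 0) ^ 2 + ∑ i ∈ Finset.univ.erase (0 : Fin n), x i ^ 2)

/-- `V₊(x) = sup { x·λ : λ ∈ 𝕊^{n-1}, λ₁ ≥ 0 }`; explicitly `|x|` if `x₁ ≥ 0`
and `|x̄|` if `x₁ < 0`. -/
noncomputable def Vplus (n : ℕ) [NeZero n] (x : EuclideanSpace ℝ (Fin n)) : ℝ :=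
  if 0 ≤ x 0 then ‖x‖ else Real.sqrt (∑ i ∈ Finset.univ.erase (0 : Fin n), x i ^ 2)

/-!
Along the ray `r θ` one has `z(rθ)² = f(r θ₁)² + r² |θ̄|²`. If `θ₁ ≥ 0` then `V₊(rθ) = r`, and
`t < f t < √(1 + t²)` at `t = r θ₁ ≥ 0` puts `z(rθ)²` between `r²` and `r² + 1`. If `θ₁ < 0` and
`θ̄ ≠ 0` then `V₊(rθ) = r |θ̄|`, and `0 < f(r θ₁) < f 0` since `f` is increasing. In both cases
`z = √(c² + u)` with `c → ∞` and `u` bounded, and `√(c² + u) - c ≤ u / (2c) → 0`. On the ray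
`θ = -e₁` the transversal part vanishes: `z(rθ) = f(-r) → l_k` while `V₊(rθ) = 0`.
-/

open Topology

lemma sqrt_sq_add_le_add_div {c u : ℝ} (hc : 0 < c) (hu : 0 ≤ u) :
    √(c ^ 2 + u) ≤ c + u / (2 * c) := by
  rw [Real.sqrt_le_left (by positivity)]
  have hcu : c * (u / (2 * c)) = u / 2 := by field_simp
  nlinarith [sq_nonneg (u / (2 * c))]

lemma tendsto_sqrt_sq_add_sub_self {α : Type*} {l : Filter α} {c u : α → ℝ} {B : ℝ}
    (hc : Tendsto c l atTop) (hu : ∀ᶠ x in l, 0 ≤ u x ∧ u x ≤ B) :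
    Tendsto (fun x => √(c x ^ 2 + u x) - c x) l (𝓝 0) := by
  have hc_pos : ∀ᶠ x in l, 0 < c x := hc.eventually_gt_atTop 0
  refine squeeze_zero' ?_ ?_ ((tendsto_const_nhds (x := B)).div_atTop (hc.const_mul_atTop two_pos))
  · filter_upwards [hc_pos, hu] with x hcx hux
    rw [sub_nonneg]
    calc c x = √(c x ^ 2) := (Real.sqrt_sq hcx.le).symm
      _ ≤ √(c x ^ 2 + u x) := Real.sqrt_le_sqrt (by linarith [hux.1])
  · filter_upwards [hc_pos, hu] with x hcx hux
    calc √(c x ^ 2 + u x) - c x ≤ u x / (2 * c x) := by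
          linarith [sqrt_sq_add_le_add_div hcx hux.1]
      _ ≤ B / (2 * c x) := by gcongr; exact hux.2

lemma lk_nonneg {n k : ℕ} (hkn : k ≤ n) : 0 ≤ lk n k :=
  Real.rpow_nonneg (div_nonneg (sub_nonneg.2 (by exact_mod_cast hkn)) n.cast_nonneg) _

namespace IsAdmissibleProfile

variable {n k : ℕ} {f : ℝ → ℝ}

lemma lt_self (hf : IsAdmissibleProfile n k f) (t : ℝ) : t < f t :=
  (le_max_right _ _).trans_lt (hf.2.2.2.2.1 t).1

lemma pos (hf : IsAdmissibleProfile n k f) (hkn : k ≤ n) (t : ℝ) : 0 < f t :=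
  ((lk_nonneg hkn).trans (le_max_left _ t)).trans_lt (hf.2.2.2.2.1 t).1

lemma sq_lt_one_add_sq (hf : IsAdmissibleProfile n k f) (hkn : k ≤ n) (t : ℝ) :
    f t ^ 2 < 1 + t ^ 2 :=
  (Real.lt_sqrt (hf.pos hkn t).le).1 (hf.2.2.2.2.1 t).2

lemma strictMono (hf : IsAdmissibleProfile n k f) : StrictMono f :=
  strictMono_of_deriv_pos fun t => (hf.2.2.1 t).1

lemma tendsto_atBot (hf : IsAdmissibleProfile n k f) : Tendsto f atBot (𝓝 (lk n k)) :=
  hf.2.2.2.1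

end IsAdmissibleProfile

section Ray

variable {n : ℕ} [NeZero n]

noncomputable def barNormSq (x : EuclideanSpace ℝ (Fin n)) : ℝ :=
  ∑ i ∈ Finset.univ.erase (0 : Fin n), x i ^ 2

lemma barNormSq_nonneg (x : EuclideanSpace ℝ (Fin n)) : 0 ≤ barNormSq x :=
  Finset.sum_nonneg fun _ _ => sq_nonneg _

lemma barNormSq_smul (r : ℝ) (x : EuclideanSpace ℝ (Fin n)) :
    barNormSq (r • x) = r ^ 2 * barNormSq x := by
  simp only [barNormSq, PiLp.smul_apply, smul_eq_mul, mul_pow, Finset.mul_sum]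

lemma sq_add_barNormSq (x : EuclideanSpace ℝ (Fin n)) : x 0 ^ 2 + barNormSq x = ‖x‖ ^ 2 := by
  rw [EuclideanSpace.norm_sq_eq, barNormSq, ← Finset.add_sum_erase _ _ (Finset.mem_univ 0)]
  simp only [Real.norm_eq_abs, sq_abs]

lemma zfun_eq (f : ℝ → ℝ) (x : EuclideanSpace ℝ (Fin n)) :
    zfun n f x = √(f (x 0) ^ 2 + barNormSq x) :=
  rfl

lemma Vplus_of_nonneg {x : EuclideanSpace ℝ (Fin n)} (hx : 0 ≤ x 0) : Vplus n x = ‖x‖ :=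
  if_pos hx

lemma Vplus_of_neg {x : EuclideanSpace ℝ (Fin n)} (hx : x 0 < 0) : Vplus n x = √(barNormSq x) :=
  if_neg hx.not_ge

lemma barNormSq_pos_of_ne_neg_single {θ : EuclideanSpace ℝ (Fin n)} (hθ : ‖θ‖ = 1)
    (ha : θ 0 < 0) (hne : θ ≠ -EuclideanSpace.single 0 1) : 0 < barNormSq θ := by
  refine (barNormSq_nonneg θ).lt_of_ne fun hzero => hne ?_
  have htail : ∀ i ∈ Finset.univ.erase (0 : Fin n), θ i ^ 2 = 0 :=
    (Finset.sum_eq_zero_iff_of_nonneg fun _ _ => sq_nonneg _).1 hzero.symm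
  have hhead : θ 0 = -1 := by
    have hsq := sq_add_barNormSq θ
    rw [← hzero, hθ] at hsq
    nlinarith
  ext i
  by_cases hi : i = 0
  · subst hi
    simp [hhead]
  · simp [hi, pow_eq_zero_iff two_ne_zero |>.1 (htail i (by simp [hi]))]

variable {k : ℕ} {f : ℝ → ℝ}

lemma tendsto_zfun_sub_Vplus_neg_single (hf : IsAdmissibleProfile n k f) (hkn : k ≤ n) :
    Tendsto (fun r : ℝ => zfun n f (r • -EuclideanSpace.single 0 1) -
      Vplus n (r • -EuclideanSpace.single 0 1)) atTop (𝓝 (lk n k)) := by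
  refine (hf.tendsto_atBot.comp tendsto_neg_atTop_atBot).congr' ?_
  filter_upwards [eventually_gt_atTop 0] with r hr
  set x : EuclideanSpace ℝ (Fin n) := r • -EuclideanSpace.single 0 1
  have hhead : x 0 = -r := by simp [x]
  have htail : barNormSq x = 0 := by
    have hsq := sq_add_barNormSq x
    rw [hhead, norm_smul, norm_neg, PiLp.norm_single, norm_one, mul_one,
      Real.norm_of_nonneg hr.le] at hsq
    linear_combination hsq
  rw [zfun_eq, Vplus_of_neg (by rw [hhead]; linarith), hhead, htail, add_zero, sqrt_zero,
    sub_zero, sqrt_sq (hf.pos hkn _).le, Function.comp_apply]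

lemma tendsto_zfun_sub_Vplus_of_nonneg (hf : IsAdmissibleProfile n k f) (hkn : k ≤ n)
    {θ : EuclideanSpace ℝ (Fin n)} (hθ : ‖θ‖ = 1) (ha : 0 ≤ θ 0) :
    Tendsto (fun r : ℝ => zfun n f (r • θ) - Vplus n (r • θ)) atTop (𝓝 0) := by
  have hbounds : ∀ᶠ r : ℝ in atTop,
      0 ≤ f (r * θ 0) ^ 2 - (r * θ 0) ^ 2 ∧ f (r * θ 0) ^ 2 - (r * θ 0) ^ 2 ≤ 1 := by
    filter_upwards [eventually_ge_atTop 0] with r hr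
    have hlt := hf.lt_self (r * θ 0)
    have hra : 0 ≤ r * θ 0 := mul_nonneg hr ha
    exact ⟨by nlinarith, by linarith [hf.sq_lt_one_add_sq hkn (r * θ 0)]⟩
  refine (tendsto_sqrt_sq_add_sub_self tendsto_id hbounds).congr' ?_
  filter_upwards [eventually_ge_atTop 0] with r hr
  have hhead : (r • θ) 0 = r * θ 0 := rfl
  have hnorm : ‖r • θ‖ = r := by rw [norm_smul, hθ, mul_one, Real.norm_of_nonneg hr]
  have hsq := sq_add_barNormSq θ
  rw [hθ] at hsq
  rw [zfun_eq, Vplus_of_nonneg (by rw [hhead]; positivity), hnorm, hhead, barNormSq_smul, id]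
  congr 2
  linear_combination -r ^ 2 * hsq

lemma tendsto_zfun_sub_Vplus_of_neg (hf : IsAdmissibleProfile n k f) (hkn : k ≤ n)
    {θ : EuclideanSpace ℝ (Fin n)} (ha : θ 0 < 0) (hS : 0 < barNormSq θ) :
    Tendsto (fun r : ℝ => zfun n f (r • θ) - Vplus n (r • θ)) atTop (𝓝 0) := by
  have hbounds : ∀ᶠ r : ℝ in atTop, 0 ≤ f (r * θ 0) ^ 2 ∧ f (r * θ 0) ^ 2 ≤ f 0 ^ 2 := by
    filter_upwards [eventually_ge_atTop 0] with r hr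
    have hle : f (r * θ 0) ≤ f 0 :=
      hf.strictMono.monotone (mul_nonpos_of_nonneg_of_nonpos hr ha.le)
    exact ⟨sq_nonneg _, pow_le_pow_left₀ (hf.pos hkn _).le hle 2⟩
  refine (tendsto_sqrt_sq_add_sub_self
    (tendsto_id.atTop_mul_const (sqrt_pos.2 hS)) hbounds).congr' ?_
  filter_upwards [eventually_gt_atTop 0] with r hr
  have hhead : (r • θ) 0 = r * θ 0 := rfl
  rw [zfun_eq, Vplus_of_neg (by rw [hhead]; exact mul_neg_of_pos_of_neg hr ha), hhead,
    barNormSq_smul, sqrt_mul (sq_nonneg r), sqrt_sq hr.le, mul_pow, sq_sqrt hS.le, add_comm,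
    id]

end Ray

theorem semitrough_radial_limits_general (n k : ℕ) [NeZero n]
    (hkn : k ≤ n)
    (f : ℝ → ℝ) (hf : IsAdmissibleProfile n k f)
    (θ : EuclideanSpace ℝ (Fin n)) (hθ : ‖θ‖ = 1) :
    (θ = -(EuclideanSpace.single (0 : Fin n) (1 : ℝ)) →
      Tendsto (fun r : ℝ => zfun n f (r • θ) - Vplus n (r • θ)) atTop (nhds (lk n k))) ∧
    (θ ≠ -(EuclideanSpace.single (0 : Fin n) (1 : ℝ)) →
      Tendsto (fun r : ℝ => zfun n f (r • θ) - Vplus n (r • θ)) atTop (nhds 0)) := by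
  refine ⟨fun hθe => hθe ▸ tendsto_zfun_sub_Vplus_neg_single hf hkn, fun hne => ?_⟩
  rcases le_or_gt 0 (θ 0) with ha | ha
  · exact tendsto_zfun_sub_Vplus_of_nonneg hf hkn hθ ha
  · exact tendsto_zfun_sub_Vplus_of_neg hf hkn ha (barNormSq_pos_of_ne_neg_single hθ ha hne)

/-- Radial asymptotics of the semitrough: `z(rθ) - V₊(rθ) → l_k` as `r → ∞` in the single
direction `θ = -e₁`, and `z(rθ) - V₊(rθ) → 0` in every other unit direction. -/
theorem semitrough_radial_limits (n k : ℕ) [NeZero n]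
    (hn : 2 ≤ n) (hk1 : 1 ≤ k) (hkn : k ≤ n)
    (f : ℝ → ℝ) (hf : IsAdmissibleProfile n k f)
    (θ : EuclideanSpace ℝ (Fin n)) (hθ : ‖θ‖ = 1) :
    (θ = -(EuclideanSpace.single (0 : Fin n) (1 : ℝ)) →
      Tendsto (fun r : ℝ => zfun n f (r • θ) - Vplus n (r • θ)) atTop (nhds (lk n k))) ∧
    (θ ≠ -(EuclideanSpace.single (0 : Fin n) (1 : ℝ)) →
      Tendsto (fun r : ℝ => zfun n f (r • θ) - Vplus n (r • θ)) atTop (nhds 0)) :=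
  semitrough_radial_limits_general n k hkn f hf θ hθ
end

section
/- Let n ≥ 2 and let q : ℝⁿ \ {0} → ℝ be homogeneous of degree zero (q(x) = q(x/|x|)), twice continuously differentiable with locally Lipschitz second derivatives, and satisfy q(y) = 0 for every y with y₁ ≤ 0. Then there exist constants a₀, a₁, a₄ > 0 such that for every y ∈ 𝕊^{n-1} with y₁ ≥ 0: |q(y)| ≤ a₀·y₁², |Dq(y)| ≤ a₁·y₁, and |∂q/∂x_i(y)| ≤ a₄·y₁² for each i ∈ {2, …, n}. -/
open Filter Real
open scoped RealInnerProductSpace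

/-!
Since `q` vanishes on the open half space `{x₁ < 0}`, so do `Dq` and `D²q`, and by continuity
all three vanish on the equator `{x₁ = 0}` away from the origin. For `y` on the unit sphere
with `0 ≤ y₁ ≤ 1/2`, let `z = y - y₁ e₁` be its projection onto the equator, at distance `y₁`.
The segment `[z, y]` stays in the annulus `1/2 ≤ |x| ≤ 3/2`, on which `D²q` is Lipschitz with
some constant `L` (local Lipschitz bounds plus compactness). Three applications of the mean value
inequality from `z` along the segment give `|D²q| ≤ L y₁`, `|Dq(y)| ≤ L y₁²` and
`|q(y)| ≤ L y₁³`. For `y₁ ≥ 1/2` it suffices to bound `q` and `Dq` on the sphere.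
-/

open Metric Set

section Flatness

variable {E F : Type*} [NormedAddCommGroup E] [NormedSpace ℝ E]
  [NormedAddCommGroup F] [NormedSpace ℝ F]

theorem Set.EqOn.fderiv_eqOn_zero {f : E → F} {U : Set E} (hU : IsOpen U)
    (hf : EqOn f 0 U) : EqOn (fderiv ℝ f) 0 U := fun x hx => by
  rw [(hf.eventuallyEq_of_mem (hU.mem_nhds hx)).fderiv_eq, fderiv_zero]

theorem ContDiffOn.fderiv_eqOn_zero_of_eqOn_zero {f : E → F} {Ω U : Set E}
    (hf : ContDiffOn ℝ 2 f Ω) (hΩ : IsOpen Ω) (hU : IsOpen U) (hUΩ : U ⊆ Ω)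
    (h0 : EqOn f 0 U) :
    EqOn (fderiv ℝ f) 0 (Ω ∩ closure U) ∧
      EqOn (fderiv ℝ (fderiv ℝ f)) 0 (Ω ∩ closure U) := by
  have hf' : ContDiffOn ℝ 1 (fderiv ℝ f) Ω := hf.fderiv_of_isOpen hΩ (by norm_num)
  have h1 : EqOn (fderiv ℝ f) 0 U := h0.fderiv_eqOn_zero hU
  have hsub : U ⊆ Ω ∩ closure U := subset_inter hUΩ subset_closure
  exact ⟨h1.of_subset_closure
      ((hf.continuousOn_fderiv_of_isOpen hΩ (by norm_num)).mono inter_subset_left)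
      continuousOn_const hsub inter_subset_right,
    (h1.fderiv_eqOn_zero hU).of_subset_closure
      ((hf'.continuousOn_fderiv_of_isOpen hΩ le_rfl).mono inter_subset_left)
      continuousOn_const hsub inter_subset_right⟩

theorem Convex.norm_le_mul_of_norm_fderiv_le {f : E → F} {S : Set E} {z : E} {r C : ℝ}
    (hS : Convex ℝ S) (hSr : S ⊆ closedBall z r) (hz : z ∈ S)
    (hf : ∀ x ∈ S, DifferentiableAt ℝ f x) (hfz : f z = 0)
    (hC : ∀ x ∈ S, ‖fderiv ℝ f x‖ ≤ C) {x : E} (hx : x ∈ S) :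
    ‖f x‖ ≤ C * r := by
  have hC0 : 0 ≤ C := (norm_nonneg _).trans (hC z hz)
  have hxz : ‖x - z‖ ≤ r := by simpa [dist_eq_norm] using hSr hx
  calc ‖f x‖ = ‖f x - f z‖ := by rw [hfz, sub_zero]
    _ ≤ C * ‖x - z‖ := hS.norm_image_sub_le_of_norm_fderiv_le hf hC hz hx
    _ ≤ C * r := by gcongr

theorem Convex.norm_fderiv_le_and_norm_le_of_lipschitzOnWith {f : E → F} {S : Set E}
    {z : E} {r : ℝ} {L : NNReal} (hS : Convex ℝ S) (hSr : S ⊆ closedBall z r) (hz : z ∈ S)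
    (hf : ∀ x ∈ S, DifferentiableAt ℝ f x)
    (hf' : ∀ x ∈ S, DifferentiableAt ℝ (fderiv ℝ f) x)
    (hL : LipschitzOnWith L (fderiv ℝ (fderiv ℝ f)) S)
    (h0 : f z = 0) (h1 : fderiv ℝ f z = 0) (h2 : fderiv ℝ (fderiv ℝ f) z = 0)
    {x : E} (hx : x ∈ S) : ‖fderiv ℝ f x‖ ≤ L * r ^ 2 ∧ ‖f x‖ ≤ L * r ^ 3 := by
  have hD2 : ∀ x ∈ S, ‖fderiv ℝ (fderiv ℝ f) x‖ ≤ L * r := fun x hx => by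
    have hxz : dist x z ≤ r := hSr hx
    have hlip := hL.dist_le_mul x hx z hz
    rw [h2] at hlip
    have hnorm := dist_zero_right (fderiv ℝ (fderiv ℝ f) x)
    exact (hnorm.symm.trans_le hlip).trans (by gcongr)
  have hD1 : ∀ x ∈ S, ‖fderiv ℝ f x‖ ≤ L * r ^ 2 := fun x hx => by
    simpa [pow_two, mul_assoc] using hS.norm_le_mul_of_norm_fderiv_le hSr hz hf' h1 hD2 hx
  refine ⟨hD1 x hx, ?_⟩
  simpa [pow_succ, mul_assoc] using hS.norm_le_mul_of_norm_fderiv_le hSr hz hf h0 hD1 hx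

theorem IsCompact.exists_bound_of_contDiffOn {f : E → F} {K Ω : Set E} (hK : IsCompact K)
    (hf : ContDiffOn ℝ 1 f Ω) (hΩ : IsOpen Ω) (hKΩ : K ⊆ Ω) :
    ∃ M, ∀ x ∈ K, ‖f x‖ ≤ M ∧ ‖fderiv ℝ f x‖ ≤ M := by
  obtain ⟨M₀, hM₀⟩ := hK.exists_bound_of_continuousOn (hf.continuousOn.mono hKΩ)
  obtain ⟨M₁, hM₁⟩ :=
    hK.exists_bound_of_continuousOn ((hf.continuousOn_fderiv_of_isOpen hΩ le_rfl).mono hKΩ)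
  exact ⟨max M₀ M₁, fun x hx =>
    ⟨(hM₀ x hx).trans (le_max_left _ _), (hM₁ x hx).trans (le_max_right _ _)⟩⟩

end Flatness

theorem locallyLipschitzOn_of_forall_ball {X Y : Type*} [PseudoMetricSpace X]
    [PseudoMetricSpace Y] {g : X → Y} {Ω : Set X}
    (hg : ∀ x ∈ Ω, ∃ ε > (0 : ℝ), ∃ K, LipschitzOnWith K g (ball x ε)) :
    LocallyLipschitzOn Ω g := fun x hx => by
  obtain ⟨ε, hε, K, hK⟩ := hg x hx
  exact ⟨K, ball x ε, mem_nhdsWithin_of_mem_nhds (ball_mem_nhds x hε), hK⟩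

theorem EuclideanSpace.closure_setOf_apply_neg {ι : Type*} [Fintype ι] (i : ι) :
    closure {x : EuclideanSpace ℝ ι | x i < 0} = {x | x i ≤ 0} := by
  change closure ((fun x : EuclideanSpace ℝ ι => x i) ⁻¹' Iio 0) = (fun x => x i) ⁻¹' Iic 0
  rw [← (PiLp.isOpenMap_apply 2 _ i).preimage_closure_eq_closure_preimage (by fun_prop),
    closure_Iio]

section Hemisphere

variable {n : ℕ} [NeZero n]

local notation "E" => EuclideanSpace ℝ (Fin n)

theorem fderiv_eq_zero_of_apply_zero_nonpos {q : E → ℝ}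
    (hq2 : ContDiffOn ℝ 2 q {x : E | x ≠ 0})
    (hqzero : ∀ x : E, x ≠ 0 → x 0 ≤ 0 → q x = 0) {z : E} (hz : z ≠ 0) (hz0 : z 0 ≤ 0) :
    fderiv ℝ q z = 0 ∧ fderiv ℝ (fderiv ℝ q) z = 0 := by
  have hU : {x : E | x 0 < 0} ⊆ {x | x ≠ 0} := fun x hx h0 => by simp [h0] at hx
  have hflat := hq2.fderiv_eqOn_zero_of_eqOn_zero isOpen_ne
    (isOpen_lt (by fun_prop) continuous_const) hU fun x hx => hqzero x (hU hx) (le_of_lt hx)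
  have hzU : z ∈ {x : E | x ≠ 0} ∩ closure {x | x 0 < 0} := by
    rw [EuclideanSpace.closure_setOf_apply_neg]
    exact ⟨hz, hz0⟩
  exact ⟨hflat.1 hzU, hflat.2 hzU⟩

theorem norm_fderiv_le_and_abs_le_of_apply_zero_le_half {q : E → ℝ}
    (hq2 : ContDiffOn ℝ 2 q {x : E | x ≠ 0})
    (hqzero : ∀ x : E, x ≠ 0 → x 0 ≤ 0 → q x = 0) {L : NNReal}
    (hL : LipschitzOnWith L (fderiv ℝ (fderiv ℝ q)) (closedBall 0 (3 / 2) \ ball 0 (1 / 2)))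
    {y : E} (hy : ‖y‖ = 1) (hy0 : 0 ≤ y 0) (hy0' : y 0 ≤ 1 / 2) :
    ‖fderiv ℝ q y‖ ≤ L * y 0 ^ 2 ∧ |q y| ≤ L * y 0 ^ 3 := by
  set z : E := y - y 0 • EuclideanSpace.single 0 1
  have hz0 : z 0 = 0 := by simp [z]
  have hyz : dist y z = y 0 := by simp [z, norm_smul, abs_of_nonneg hy0]
  have hseg_z : segment ℝ z y ⊆ closedBall z (y 0) :=
    (convex_closedBall _ _).segment_subset (mem_closedBall_self hy0) hyz.le
  have hseg_y : segment ℝ z y ⊆ closedBall y (y 0) :=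
    (convex_closedBall _ _).segment_subset (by rw [mem_closedBall, dist_comm, hyz])
      (mem_closedBall_self hy0)
  have hseg_annulus : segment ℝ z y ⊆ closedBall 0 (3 / 2) \ ball 0 (1 / 2) :=
    fun x hx => by
    have hxy : ‖x - y‖ ≤ y 0 := hseg_y hx
    have h₁ := norm_le_norm_add_norm_sub' x y
    have h₂ := norm_le_norm_add_norm_sub' y x
    rw [norm_sub_rev] at h₂
    simp only [Set.mem_sdiff, mem_closedBall, mem_ball, dist_zero_right, not_lt]
    constructor <;> linarith
  have hne : ∀ x ∈ segment ℝ z y, x ≠ 0 := fun x hx h0 => by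
    simpa [h0] using hseg_annulus hx
  have hC2 : ∀ x ∈ segment ℝ z y, ContDiffAt ℝ 2 q x := fun x hx =>
    hq2.contDiffAt (isOpen_ne.mem_nhds (hne x hx))
  have hzS := left_mem_segment ℝ z y
  obtain ⟨h1, h2⟩ := fderiv_eq_zero_of_apply_zero_nonpos hq2 hqzero (hne z hzS) hz0.le
  simpa using (convex_segment z y).norm_fderiv_le_and_norm_le_of_lipschitzOnWith hseg_z hzS
    (fun x hx => (hC2 x hx).differentiableAt (by norm_num))
    (fun x hx => ((hC2 x hx).fderiv_right (m := 1) (by norm_num)).differentiableAt (by norm_num))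
    (hL.mono hseg_annulus) (hqzero z (hne z hzS) hz0.le) h1 h2 (right_mem_segment ℝ z y)

theorem exists_abs_le_and_norm_fderiv_le_sq {q : E → ℝ}
    (hq2 : ContDiffOn ℝ 2 q {x : E | x ≠ 0})
    (hq21 : ∀ x : E, x ≠ 0 → ∃ ε > (0 : ℝ), ∃ K : NNReal,
      LipschitzOnWith K (fderiv ℝ (fderiv ℝ q)) (ball x ε))
    (hqzero : ∀ x : E, x ≠ 0 → x 0 ≤ 0 → q x = 0) :
    ∃ A > (0 : ℝ), ∀ y : E, ‖y‖ = 1 → 0 ≤ y 0 →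
      |q y| ≤ A * y 0 ^ 2 ∧ ‖fderiv ℝ q y‖ ≤ A * y 0 ^ 2 := by
  have hannulus : closedBall (0 : E) (3 / 2) \ ball 0 (1 / 2) ⊆ {x | x ≠ 0} :=
    fun x hx h0 => by simp [h0] at hx
  obtain ⟨L, hL⟩ := ((locallyLipschitzOn_of_forall_ball hq21).mono hannulus)
    |>.exists_lipschitzOnWith_of_compact ((isCompact_closedBall _ _).diff isOpen_ball)
  obtain ⟨M, hM⟩ := (isCompact_sphere (0 : E) 1).exists_bound_of_contDiffOn
    (hq2.of_le (by norm_num)) isOpen_ne fun x hx h0 => by simp [h0] at hx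
  set A : ℝ := L + 4 * |M| + 1
  refine ⟨A, by positivity, fun y hy hy0 => ?_⟩
  have hy1 : y 0 ≤ 1 := hy ▸ (Real.le_norm_self _).trans (PiLp.norm_apply_le y 0)
  rcases le_total (y 0) (1 / 2) with hsmall | hlarge
  · obtain ⟨hDq, hq⟩ :=
      norm_fderiv_le_and_abs_le_of_apply_zero_le_half hq2 hqzero hL hy hy0 hsmall
    have hLA : L * y 0 ^ 2 ≤ A * y 0 ^ 2 := by gcongr; linarith [abs_nonneg M]
    have hq' : |q y| ≤ L * y 0 ^ 2 := hq.trans <|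
      mul_le_mul_of_nonneg_left (pow_le_pow_of_le_one hy0 hy1 (by norm_num)) L.coe_nonneg
    exact ⟨hq'.trans hLA, hDq.trans hLA⟩
  · obtain ⟨hq, hDq⟩ := hM y (by simpa using hy)
    have hMA : M ≤ A * y 0 ^ 2 :=
      calc M ≤ |M| * (4 * y 0 ^ 2) :=
            (le_abs_self M).trans (le_mul_of_one_le_right (abs_nonneg M) (by nlinarith))
        _ ≤ A * y 0 ^ 2 := by
            nlinarith [mul_nonneg (add_nonneg L.coe_nonneg zero_le_one) (sq_nonneg (y 0))]
    exact ⟨(Real.norm_eq_abs _ ▸ hq).trans hMA, hDq.trans hMA⟩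

end Hemisphere

theorem perturbation_decay_estimates_general (n : ℕ) [NeZero n]
    (q : EuclideanSpace ℝ (Fin n) → ℝ)
    (hq2 : ContDiffOn ℝ 2 q {x : EuclideanSpace ℝ (Fin n) | x ≠ 0})
    (hq21 : ∀ x : EuclideanSpace ℝ (Fin n), x ≠ 0 →
      ∃ ε > (0 : ℝ), ∃ K : NNReal,
        LipschitzOnWith K (fderiv ℝ (fderiv ℝ q)) (Metric.ball x ε))
    (hqzero : ∀ x : EuclideanSpace ℝ (Fin n), x ≠ 0 → x 0 ≤ 0 → q x = 0) :
    ∃ a₀ > (0 : ℝ), ∃ a₁ > (0 : ℝ), ∃ a₄ > (0 : ℝ),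
      ∀ y : EuclideanSpace ℝ (Fin n), ‖y‖ = 1 → 0 ≤ y 0 →
        |q y| ≤ a₀ * (y 0) ^ 2 ∧
        ‖gradient q y‖ ≤ a₁ * y 0 ∧
        ∀ i : Fin n, i ≠ 0 → |gradient q y i| ≤ a₄ * (y 0) ^ 2 := by
  obtain ⟨A, hA, hbound⟩ := exists_abs_le_and_norm_fderiv_le_sq hq2 hq21 hqzero
  refine ⟨A, hA, A, hA, A, hA, fun y hy hy0 => ?_⟩
  obtain ⟨hq, hDq⟩ := hbound y hy hy0
  have hy1 : y 0 ≤ 1 := hy ▸ (Real.le_norm_self _).trans (PiLp.norm_apply_le y 0)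
  have hgrad : ‖gradient q y‖ ≤ A * y 0 ^ 2 := by
    rwa [gradient, LinearIsometryEquiv.norm_map]
  refine ⟨hq, hgrad.trans (by gcongr; exact pow_le_of_le_one hy0 hy1 two_ne_zero), ?_⟩
  exact fun i _ => ((Real.norm_eq_abs _).symm.trans_le (PiLp.norm_apply_le _ i)).trans hgrad

/-- For a degree-zero homogeneous `C^{2,1}` perturbation `q` vanishing on the half
space `{y₁ ≤ 0}`, on the upper unit hemisphere one has the quadratic decay estimates
`|q(y)| ≤ a₀ y₁²`, `|Dq(y)| ≤ a₁ y₁`, and `|∂q/∂x_i(y)| ≤ a₄ y₁²` for `i ≥ 2`. -/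
theorem perturbation_decay_estimates (n : ℕ) [NeZero n] (hn : 2 ≤ n)
    (q : EuclideanSpace ℝ (Fin n) → ℝ)
    (hq2 : ContDiffOn ℝ 2 q {x : EuclideanSpace ℝ (Fin n) | x ≠ 0})
    (hq21 : ∀ x : EuclideanSpace ℝ (Fin n), x ≠ 0 →
      ∃ ε > (0 : ℝ), ∃ K : NNReal,
        LipschitzOnWith K (fderiv ℝ (fderiv ℝ q)) (Metric.ball x ε))
    (hqhom : ∀ x : EuclideanSpace ℝ (Fin n), x ≠ 0 → q x = q (‖x‖⁻¹ • x))
    (hqzero : ∀ x : EuclideanSpace ℝ (Fin n), x ≠ 0 → x 0 ≤ 0 → q x = 0) :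
    ∃ a₀ > (0 : ℝ), ∃ a₁ > (0 : ℝ), ∃ a₄ > (0 : ℝ),
      ∀ y : EuclideanSpace ℝ (Fin n), ‖y‖ = 1 → 0 ≤ y 0 →
        |q y| ≤ a₀ * (y 0) ^ 2 ∧
        ‖gradient q y‖ ≤ a₁ * y 0 ∧
        ∀ i : Fin n, i ≠ 0 → |gradient q y i| ≤ a₄ * (y 0) ^ 2 :=
  perturbation_decay_estimates_general n q hq2 hq21 hqzero
end

section
/- Let n ≥ 2, l > 0, M > 0, and δ ∈ (0, π/2). Then for every y ∈ 𝕊^{n-1} with arccos(-y₁) < δ (i.e. y lies in the geodesic ball of radius δ around -e₁) and every x_n ≥ 0, one has M·V₊(y) + √( l² + (x_n - M·y_n)² + M²·(1 - y₁² - y_n²) ) ≥ -M + √( l² + (x_n + M)² ). -/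
open Filter Real

/-!
Always `V₊(y) ≥ |ȳ| = √(1 - y₁²) =: s`, and `yₙ ≤ s`, so the radicand on the left is
`l² + xₙ² - 2 M xₙ yₙ + M² s² ≥ l² + (xₙ - M s)²`, and since `v ↦ √(l² + v²)` is 1-Lipschitz,
`√(l² + (xₙ + M)²) ≤ √(l² + (xₙ - M s)²) + M (1 + s)`.
-/

theorem Real.sqrt_sq_add_sq_le_add_abs_sub (l u v : ℝ) :
    √(l ^ 2 + u ^ 2) ≤ √(l ^ 2 + v ^ 2) + |u - v| := by
  have hv : |v| ≤ √(l ^ 2 + v ^ 2) := Real.abs_le_sqrt (by nlinarith)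
  have hcross : v * (u - v) ≤ √(l ^ 2 + v ^ 2) * |u - v| :=
    calc v * (u - v) ≤ |v| * |u - v| := by rw [← abs_mul]; exact le_abs_self _
      _ ≤ √(l ^ 2 + v ^ 2) * |u - v| := by gcongr
  rw [Real.sqrt_le_left (by positivity)]
  nlinarith [Real.sq_sqrt (show 0 ≤ l ^ 2 + v ^ 2 by positivity), sq_abs (u - v)]

theorem neg_add_sqrt_le_mul_add_sqrt {l M x s a : ℝ} (hM : 0 ≤ M) (hx : 0 ≤ x) (hs : 0 ≤ s)
    (has : a ≤ s) :
    -M + √(l ^ 2 + (x + M) ^ 2) ≤ M * s + √(l ^ 2 + (x - M * a) ^ 2 + M ^ 2 * (s ^ 2 - a ^ 2)) := by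
  have hradicand : l ^ 2 + (x - M * s) ^ 2 ≤ l ^ 2 + (x - M * a) ^ 2 + M ^ 2 * (s ^ 2 - a ^ 2) := by
    nlinarith [mul_nonneg (mul_nonneg hM hx) (sub_nonneg.mpr has)]
  have hlip := Real.sqrt_sq_add_sq_le_add_abs_sub l (x + M) (x - M * s)
  rw [show x + M - (x - M * s) = M * (1 + s) by ring, abs_of_nonneg (by positivity)] at hlip
  linarith [Real.sqrt_le_sqrt hradicand]

section Vplus

variable {n : ℕ} [NeZero n]

theorem sqrt_sum_erase_zero_le_Vplus (x : EuclideanSpace ℝ (Fin n)) :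
    √(∑ i ∈ Finset.univ.erase (0 : Fin n), x i ^ 2) ≤ Vplus n x := by
  unfold Vplus
  split_ifs
  · rw [EuclideanSpace.norm_eq]
    simp only [Real.norm_eq_abs, sq_abs]
    exact Real.sqrt_le_sqrt (Finset.sum_le_univ_sum_of_nonneg fun i => sq_nonneg _)
  · rfl

theorem sum_erase_zero_sq_eq (x : EuclideanSpace ℝ (Fin n)) :
    ∑ i ∈ Finset.univ.erase (0 : Fin n), x i ^ 2 = ‖x‖ ^ 2 - x 0 ^ 2 := by
  rw [EuclideanSpace.real_norm_sq_eq, ← Finset.sum_erase_add _ _ (Finset.mem_univ 0)]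
  ring

end Vplus

/-- Comparison inequality between the supersolution and subsolution in the perpendicular
directions: for `y` in the geodesic ball of radius `δ < π/2` about `-e₁` and `xₙ ≥ 0`,
`M·V₊(y) + √(l² + (xₙ - M yₙ)² + M²(1 - y₁² - yₙ²)) ≥ -M + √(l² + (xₙ + M)²)`. -/
theorem supersolution_dominates_subsolution (n : ℕ) [NeZero n] (hn : 2 ≤ n)
    (l M δ : ℝ) (hM : 0 < M) :
    ∀ y : EuclideanSpace ℝ (Fin n), ‖y‖ = 1 → Real.arccos (-(y 0)) < δ →
      ∀ xn : ℝ, 0 ≤ xn →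
        M * Vplus n y +
            Real.sqrt (l ^ 2 + (xn - M * y ⟨n - 1, by omega⟩) ^ 2 +
              M ^ 2 * (1 - (y 0) ^ 2 - (y ⟨n - 1, by omega⟩) ^ 2)) ≥
          -M + Real.sqrt (l ^ 2 + (xn + M) ^ 2) := by
  intro y hy _ xn hxn
  set k : Fin n := ⟨n - 1, by omega⟩
  have ht := sum_erase_zero_sq_eq y
  rw [hy, one_pow] at ht
  set t := ∑ i ∈ Finset.univ.erase (0 : Fin n), y i ^ 2
  have hk : y k ^ 2 ≤ t :=
    Finset.single_le_sum (fun i _ => sq_nonneg (y i))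
      (Finset.mem_erase.mpr ⟨Fin.ne_of_val_ne (by simp [k]; omega), Finset.mem_univ k⟩)
  have hsq : √t ^ 2 = 1 - y 0 ^ 2 := by rw [Real.sq_sqrt (by positivity), ht]
  have hmain := neg_add_sqrt_le_mul_add_sqrt (l := l) hM.le hxn (Real.sqrt_nonneg t)
    (Real.le_sqrt_of_sq_le hk)
  rw [hsq] at hmain
  have hV := mul_le_mul_of_nonneg_left (sqrt_sum_erase_zero_le_Vplus y) hM.le
  linarith
end

section
/- Let n ≥ 1, let F be a nonempty closed subset of the unit sphere 𝕊^{n-1} ⊂ ℝⁿ, define V_F(x) = sup_{λ ∈ F} x·λ, and let u : ℝⁿ → ℝ be strictly convex (hence continuous) with |u(x) - V_F(x)| ≤ C for all x ∈ ℝⁿ, for some constant C > 0. Then for every ξ in the interior of the convex hull of F, the supremum sup_{x ∈ ℝⁿ}( ξ·x - u(x) ) is finite and attained at a unique point x₀ ∈ ℝⁿ, i.e. there exists exactly one x₀ with ξ·x₀ - u(x₀) = sup_{x ∈ ℝⁿ}( ξ·x - u(x) ). -/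
open Filter
open scoped RealInnerProductSpace

/-!
Write `V_F x = sSup {⟪x, l⟫ | l ∈ F}` and `f x = ⟪ξ, x⟫ - u x`. If the closed ball of
radius `ε > 0` about `ξ` lies in the convex hull of `F`, testing `V_F x` against the point
`ξ + ε • x / ‖x‖` of that hull gives `⟪x, ξ⟫ + ε ‖x‖ ≤ V_F x ≤ u x + C`, i.e.
`f x ≤ C - ε ‖x‖`. So the continuous function `f` tends to `-∞` at infinity and has a
maximum, which is unique because `f` is strictly concave.
-/

section SupportFunction

variable {E : Type*} [NormedAddCommGroup E] [InnerProductSpace ℝ E]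

noncomputable def supportFunction (F : Set E) (x : E) : ℝ :=
  sSup ((fun l : E => ⟪x, l⟫) '' F)

variable {F : Set E}

lemma bddAbove_image_inner_of_isBounded (hF : Bornology.IsBounded F) (x : E) :
    BddAbove ((fun l : E => ⟪x, l⟫) '' F) := by
  obtain ⟨R, hR⟩ := hF.exists_norm_le
  refine ⟨‖x‖ * R, ?_⟩
  rintro _ ⟨l, hl, rfl⟩
  calc ⟪x, l⟫ ≤ ‖x‖ * ‖l‖ := real_inner_le_norm x l
    _ ≤ ‖x‖ * R := by gcongr; exact hR l hl

lemma inner_le_supportFunction_of_mem_convexHull (hF : Bornology.IsBounded F) {x y : E}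
    (hy : y ∈ convexHull ℝ F) : ⟪x, y⟫ ≤ supportFunction F x := by
  obtain ⟨l, hl, hyl⟩ := ((innerₛₗ ℝ x).convexOn convex_univ).exists_ge_of_mem_convexHull
    (Set.subset_univ F) hy
  exact hyl.trans (le_csSup (bddAbove_image_inner_of_isBounded hF x) ⟨l, hl, rfl⟩)

lemma inner_add_mul_norm_le_supportFunction (hF : Bornology.IsBounded F) {ξ : E} {ε : ℝ}
    (hε : 0 ≤ ε) (hball : Metric.closedBall ξ ε ⊆ convexHull ℝ F) (x : E) :
    ⟪x, ξ⟫ + ε * ‖x‖ ≤ supportFunction F x := by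
  have hmem : ξ + ε • ‖x‖⁻¹ • x ∈ Metric.closedBall ξ ε := by
    rw [Metric.mem_closedBall, dist_eq_norm, add_sub_cancel_left, norm_smul, norm_smul,
      norm_inv, norm_norm, Real.norm_of_nonneg hε]
    exact mul_le_of_le_one_right hε (inv_mul_le_one_of_le₀ le_rfl (norm_nonneg x))
  have hinner : ⟪x, ξ + ε • ‖x‖⁻¹ • x⟫ = ⟪x, ξ⟫ + ε * ‖x‖ := by
    rw [inner_add_right, real_inner_smul_right, real_inner_smul_right, real_inner_self_eq_norm_sq]
    rcases eq_or_ne ‖x‖ 0 with hx | hx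
    · simp [hx]
    · field_simp
  exact hinner ▸ inner_le_supportFunction_of_mem_convexHull hF (hball hmem)

lemma inner_sub_le_sub_mul_norm_of_abs_sub_supportFunction_le (hF : Bornology.IsBounded F)
    {u : E → ℝ} {C : ℝ} (hu : ∀ x, |u x - supportFunction F x| ≤ C) {ξ : E} {ε : ℝ}
    (hε : 0 ≤ ε) (hball : Metric.closedBall ξ ε ⊆ convexHull ℝ F) (x : E) :
    ⟪ξ, x⟫ - u x ≤ C - ε * ‖x‖ := by
  have hV := inner_add_mul_norm_le_supportFunction hF hε hball x
  have hux := (abs_le.1 (hu x)).1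
  rw [real_inner_comm]
  linarith

end SupportFunction

lemma Continuous.exists_forall_ge_of_le_sub_mul_norm {E : Type*} [NormedAddCommGroup E]
    [ProperSpace E] {f : E → ℝ} (hf : Continuous f) {C ε : ℝ} (hε : 0 < ε)
    (hbound : ∀ x, f x ≤ C - ε * ‖x‖) : ∃ x₀, ∀ x, f x ≤ f x₀ := by
  have hlim : Tendsto (fun x : E => C - ε * ‖x‖) (cocompact E) atBot :=
    tendsto_atBot_add_const_left _ C
      (tendsto_neg_atTop_atBot.comp (tendsto_norm_cocompact_atTop.const_mul_atTop hε))
  exact hf.exists_forall_ge (tendsto_atBot_mono hbound hlim)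

theorem legendre_sup_attained_unique_general (n : ℕ)
    (F : Set (EuclideanSpace ℝ (Fin n)))
    (hFsph : F ⊆ Metric.sphere (0 : EuclideanSpace ℝ (Fin n)) 1)
    (u : EuclideanSpace ℝ (Fin n) → ℝ)
    (hconv : StrictConvexOn ℝ Set.univ u)
    (C : ℝ)
    (hu : ∀ x : EuclideanSpace ℝ (Fin n),
      |u x - sSup ((fun l : EuclideanSpace ℝ (Fin n) => ⟪x, l⟫) '' F)| ≤ C) :
    ∀ ξ ∈ interior (convexHull ℝ F),
      ∃! x₀ : EuclideanSpace ℝ (Fin n),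
        ∀ x : EuclideanSpace ℝ (Fin n), ⟪ξ, x⟫ - u x ≤ ⟪ξ, x₀⟫ - u x₀ := by
  intro ξ hξ
  obtain ⟨ε, hε, hball⟩ :=
    Metric.nhds_basis_closedBall.mem_iff.1 (mem_interior_iff_mem_nhds.1 hξ)
  have hucont : Continuous u := continuousOn_univ.1 (hconv.convexOn.continuousOn isOpen_univ)
  have hcoercive := inner_sub_le_sub_mul_norm_of_abs_sub_supportFunction_le
    (Metric.isBounded_sphere.subset hFsph) hu hε.le hball
  obtain ⟨x₀, hx₀⟩ :=
    ((continuous_const.inner continuous_id).sub hucont).exists_forall_ge_of_le_sub_mul_norm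
      hε hcoercive
  have hconcave : StrictConcaveOn ℝ Set.univ (fun x => ⟪ξ, x⟫ - u x) :=
    ((innerₛₗ ℝ ξ).concaveOn convex_univ).sub_strictConvexOn hconv
  exact ⟨x₀, hx₀, fun y hy => hconcave.eq_of_isMaxOn (isMaxOn_univ_iff.2 hy)
    (isMaxOn_univ_iff.2 hx₀) trivial trivial⟩

/-- For a strictly convex `u` at bounded distance from `V_F`, and any `ξ` in the interior
of the convex hull of `F`, the supremum defining the Legendre transform `u*(ξ)` is
attained at exactly one point. -/
theorem legendre_sup_attained_unique (n : ℕ) (hn : 1 ≤ n)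
    (F : Set (EuclideanSpace ℝ (Fin n))) (hFne : F.Nonempty) (hFcl : IsClosed F)
    (hFsph : F ⊆ Metric.sphere (0 : EuclideanSpace ℝ (Fin n)) 1)
    (u : EuclideanSpace ℝ (Fin n) → ℝ)
    (hconv : StrictConvexOn ℝ Set.univ u)
    (C : ℝ) (hC : 0 < C)
    (hu : ∀ x : EuclideanSpace ℝ (Fin n),
      |u x - sSup ((fun l : EuclideanSpace ℝ (Fin n) => ⟪x, l⟫) '' F)| ≤ C) :
    ∀ ξ ∈ interior (convexHull ℝ F),
      ∃! x₀ : EuclideanSpace ℝ (Fin n),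
        ∀ x : EuclideanSpace ℝ (Fin n), ⟪ξ, x⟫ - u x ≤ ⟪ξ, x₀⟫ - u x₀ :=
  legendre_sup_attained_unique_general n F hFsph u hconv C hu
end

section
/- Let v : ℝⁿ → ℝ be convex and globally Lipschitz, and suppose v is differentiable on an open set U ⊆ ℝⁿ with gradient ∇v continuous on U. For ε > 0 define the inf-convolution (Moreau envelope) g_ε(ξ) = inf_{η ∈ ℝⁿ} ( v(η) + |ξ - η|²/(2ε) ). Then for every compact set K ⊂ U and every δ > 0 there exists ε > 0 such that g_ε is differentiable at every point of K and |∇g_ε(ξ) - ∇v(ξ)| ≤ δ for all ξ ∈ K. -/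
open Filter Real Metric Set
open scoped RealInnerProductSpace Topology

/-!
Since `v` is `L`-Lipschitz, the infimum defining `g_ε ξ` is attained at a point `η` with
`‖η - ξ‖ ≤ 2εL`. Minimality together with convexity makes `p = (ξ - η) / ε` a subgradient of `v`
at `η`, so `g_ε` lies above an affine function with slope `p` that touches it at `ξ`; and
`g_ε ζ ≤ v (ζ + η - ξ) + ‖ξ - η‖² / (2ε)`, with equality at `ξ`. Squeezed between two functions
that are differentiable at `ξ`, `g_ε` is differentiable there with `∇g_ε ξ = ∇v η`, and uniform
continuity of `∇v` near `K` makes this `δ`-close to `∇v ξ` once `2εL` is small.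
-/

theorem HasFDerivAt.of_squeeze {E : Type*} [NormedAddCommGroup E] [NormedSpace ℝ E]
    {l f u : E → ℝ} {u' : E →L[ℝ] ℝ} {x : E}
    (hu : HasFDerivAt u u' x) (hl : DifferentiableAt ℝ l x)
    (hlf : ∀ᶠ y in 𝓝 x, l y ≤ f y) (hfu : ∀ᶠ y in 𝓝 x, f y ≤ u y) (hx : l x = u x) :
    HasFDerivAt f u' x := by
  have hfx : f x = u x := le_antisymm hfu.self_of_nhds (hx ▸ hlf.self_of_nhds)
  have hl' : HasFDerivAt l u' x := by
    have hmin : IsLocalMin (fun y => u y - l y) x := by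
      filter_upwards [hlf, hfu] with y hly hfy
      linarith
    rw [sub_eq_zero.mp (hmin.hasFDerivAt_eq_zero (hu.sub hl.hasFDerivAt))]
    exact hl.hasFDerivAt
  refine .of_isLittleO <| Asymptotics.IsBigO.trans_isLittleO ?_
    (hl'.isLittleO.norm_left.add hu.isLittleO.norm_left)
  refine .of_bound' ?_
  filter_upwards [hlf, hfu] with y hly hfy
  simp only [Real.norm_eq_abs]
  refine (abs_le.2 ⟨?_, ?_⟩).trans (le_abs_self _) <;>
    linarith [neg_abs_le (l y - l x - u' (y - x)), le_abs_self (u y - u x - u' (y - x)),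
      abs_nonneg (l y - l x - u' (y - x)), abs_nonneg (u y - u x - u' (y - x))]

theorem LipschitzWith.exists_forall_le_add_norm_sq_div {E : Type*}
    [NormedAddCommGroup E] [ProperSpace E] {v : E → ℝ} {ε : ℝ} {L : NNReal}
    (hlip : LipschitzWith L v) (hε : 0 < ε) (ξ : E) :
    ∃ x ∈ closedBall ξ (2 * ε * L),
      ∀ y, v x + ‖ξ - x‖ ^ 2 / (2 * ε) ≤ v y + ‖ξ - y‖ ^ 2 / (2 * ε) := by
  have hcont : Continuous fun y => v y + ‖ξ - y‖ ^ 2 / (2 * ε) := by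
    have := hlip.continuous
    fun_prop
  have hξ : ξ ∈ closedBall ξ (2 * ε * L) := mem_closedBall_self (by positivity)
  obtain ⟨x, hx, hxmin⟩ := (isCompact_closedBall ξ _).exists_isMinOn ⟨ξ, hξ⟩ hcont.continuousOn
  refine ⟨x, hx, fun y => ?_⟩
  by_cases hy : y ∈ closedBall ξ (2 * ε * L)
  · exact hxmin hy
  have hfar : v ξ < v y + ‖ξ - y‖ ^ 2 / (2 * ε) := by
    rw [mem_closedBall, dist_comm, dist_eq_norm, not_le] at hy
    have hlt : L * ‖ξ - y‖ < ‖ξ - y‖ ^ 2 / (2 * ε) := by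
      rw [lt_div_iff₀ (by positivity)]
      nlinarith [mul_pos ((by positivity : (0 : ℝ) ≤ 2 * ε * L).trans_lt hy) (sub_pos.2 hy)]
    have hlip_y := hlip.le_add_mul ξ y
    rw [dist_eq_norm] at hlip_y
    linarith
  exact (hxmin hξ).trans (by simpa using hfar.le)

variable {E : Type*} [NormedAddCommGroup E] [InnerProductSpace ℝ E]

-- `⨅` of a family unbounded below is `0` in `ℝ`; a subgradient of `v` rules this out.
noncomputable def moreauEnvelope (v : E → ℝ) (ε : ℝ) (ζ : E) : ℝ :=
  ⨅ η, v η + ‖ζ - η‖ ^ 2 / (2 * ε)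

def HasSubgradientAt (v : E → ℝ) (p x : E) : Prop :=
  ∀ y, v x + ⟪p, y - x⟫ ≤ v y

theorem real_inner_le_norm_sq_div_add {ε : ℝ} (hε : 0 < ε) (p w : E) :
    ⟪p, w⟫ ≤ ‖w‖ ^ 2 / (2 * ε) + ε * ‖p‖ ^ 2 / 2 := by
  have hyoung : ‖p‖ * ‖w‖ ≤ ‖w‖ ^ 2 / (2 * ε) + ε * ‖p‖ ^ 2 / 2 := by
    rw [div_add_div _ _ (by positivity) two_ne_zero, le_div_iff₀ (by positivity)]
    nlinarith [sq_nonneg (‖w‖ - ε * ‖p‖)]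
  exact (real_inner_le_norm p w).trans hyoung

variable {v : E → ℝ} {ε : ℝ} {p x : E}

theorem HasSubgradientAt.le_add_norm_sq_div (hε : 0 < ε) (hp : HasSubgradientAt v p x)
    (ζ y : E) :
    v x + ⟪p, ζ - x⟫ - ε * ‖p‖ ^ 2 / 2 ≤ v y + ‖ζ - y‖ ^ 2 / (2 * ε) := by
  have hsplit : ⟪p, ζ - x⟫ = ⟪p, y - x⟫ + ⟪p, ζ - y⟫ := by
    rw [← inner_add_right, sub_add_sub_cancel']
  linarith [hp y, real_inner_le_norm_sq_div_add hε p (ζ - y)]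

theorem HasSubgradientAt.le_moreauEnvelope (hε : 0 < ε) (hp : HasSubgradientAt v p x)
    (ζ : E) :
    v x + ⟪p, ζ - x⟫ - ε * ‖p‖ ^ 2 / 2 ≤ moreauEnvelope v ε ζ :=
  le_ciInf (hp.le_add_norm_sq_div hε ζ)

theorem HasSubgradientAt.moreauEnvelope_le (hε : 0 < ε) (hp : HasSubgradientAt v p x)
    (ζ y : E) :
    moreauEnvelope v ε ζ ≤ v y + ‖ζ - y‖ ^ 2 / (2 * ε) :=
  ciInf_le ⟨_, forall_mem_range.2 (hp.le_add_norm_sq_div hε ζ)⟩ y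

theorem ConvexOn.hasSubgradientAt_of_le_add_mul_norm_sq (hconv : ConvexOn ℝ univ v) {c : ℝ}
    (h : ∀ y, v x + ⟪p, y - x⟫ ≤ v y + c * ‖y - x‖ ^ 2) : HasSubgradientAt v p x := by
  intro y
  have hsmall : ∀ t ∈ Ioo (0 : ℝ) 1, ⟪p, y - x⟫ ≤ v y - v x + t * (c * ‖y - x‖ ^ 2) := by
    rintro t ⟨ht0, ht1⟩
    have hseg : (1 - t) • x + t • y = x + t • (y - x) := by module
    have hconvt := hconv.2 (mem_univ x) (mem_univ y) (sub_nonneg.2 ht1.le) ht0.le (by ring)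
    have hprox := h (x + t • (y - x))
    rw [hseg, smul_eq_mul, smul_eq_mul] at hconvt
    rw [add_sub_cancel_left, inner_smul_right, norm_smul, mul_pow,
      Real.norm_of_nonneg ht0.le] at hprox
    refine le_of_mul_le_mul_left ?_ ht0
    linarith
  have hlim :
      Tendsto (fun t : ℝ => v y - v x + t * (c * ‖y - x‖ ^ 2)) (𝓝[>] 0) (𝓝 (v y - v x)) := by
    have : Continuous (fun t : ℝ => v y - v x + t * (c * ‖y - x‖ ^ 2)) := by fun_prop
    simpa using (this.tendsto 0).mono_left nhdsWithin_le_nhds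
  linarith [ge_of_tendsto hlim (eventually_of_mem (Ioo_mem_nhdsGT one_pos) hsmall)]

theorem ConvexOn.hasSubgradientAt_of_forall_le_add_norm_sq_div (hconv : ConvexOn ℝ univ v)
    (hε : 0 < ε) {ξ : E}
    (hmin : ∀ y, v x + ‖ξ - x‖ ^ 2 / (2 * ε) ≤ v y + ‖ξ - y‖ ^ 2 / (2 * ε)) :
    HasSubgradientAt v (ε⁻¹ • (ξ - x)) x := by
  refine hconv.hasSubgradientAt_of_le_add_mul_norm_sq (c := (2 * ε)⁻¹) fun y => ?_
  have hexpand : ‖ξ - y‖ ^ 2 / (2 * ε)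
      = ‖ξ - x‖ ^ 2 / (2 * ε) - ⟪ε⁻¹ • (ξ - x), y - x⟫ + (2 * ε)⁻¹ * ‖y - x‖ ^ 2 := by
    rw [← sub_sub_sub_cancel_right ξ y x, norm_sub_sq_real, real_inner_smul_left]
    field_simp
  linarith [hmin y]

theorem ConvexOn.exists_hasGradientAt_moreauEnvelope [ProperSpace E]
    (hconv : ConvexOn ℝ univ v) {L : NNReal} (hlip : LipschitzWith L v) (hε : 0 < ε) (ξ : E)
    (hdiff : ∀ x ∈ closedBall ξ (2 * ε * L), DifferentiableAt ℝ v x) :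
    ∃ x ∈ closedBall ξ (2 * ε * L), HasGradientAt (moreauEnvelope v ε) (gradient v x) ξ := by
  obtain ⟨x, hx, hmin⟩ := hlip.exists_forall_le_add_norm_sq_div hε ξ
  have hsub := hconv.hasSubgradientAt_of_forall_le_add_norm_sq_div hε hmin
  refine ⟨x, hx, ?_⟩
  have hupper : HasFDerivAt (fun ζ => v (ζ + (x - ξ)) + ‖ξ - x‖ ^ 2 / (2 * ε))
      (InnerProductSpace.toDual ℝ E (gradient v x)) ξ := by
    refine ((hasFDerivAt_comp_add_right _).2 ?_).add_const _
    rw [add_sub_cancel]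
    exact (hdiff x hx).hasGradientAt
  have hlower : DifferentiableAt ℝ
      (fun ζ => v x + ⟪ε⁻¹ • (ξ - x), ζ - x⟫ - ε * ‖ε⁻¹ • (ξ - x)‖ ^ 2 / 2) ξ :=
    (((differentiableAt_const _).inner ℝ (differentiableAt_id.sub_const x)).const_add _).sub_const _
  refine HasFDerivAt.of_squeeze hupper hlower
    (.of_forall (hsub.le_moreauEnvelope hε))
    (.of_forall fun ζ => by simpa using hsub.moreauEnvelope_le hε ζ (ζ + (x - ξ))) ?_
  simp only [add_sub_cancel, real_inner_smul_left, real_inner_self_eq_norm_sq, norm_smul,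
    norm_inv, Real.norm_of_nonneg hε.le]
  field_simp
  ring

/-- Gradient convergence of the Moreau envelope (inf-convolution): for a convex globally
Lipschitz `v`, differentiable with continuous gradient on an open set `U`, on every
compact `K ⊆ U` the inf-convolution `g_ε` is differentiable and its gradient is
uniformly `δ`-close to that of `v`, provided `ε` is small enough. -/
theorem infConvolution_gradient_close (n : ℕ)
    (v : EuclideanSpace ℝ (Fin n) → ℝ)
    (hconv : ConvexOn ℝ Set.univ v)
    (L : NNReal) (hlip : LipschitzWith L v)
    (U : Set (EuclideanSpace ℝ (Fin n))) (hU : IsOpen U)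
    (hdiff : ∀ x ∈ U, DifferentiableAt ℝ v x)
    (hgradcont : ContinuousOn (fun x => gradient v x) U) :
    ∀ K : Set (EuclideanSpace ℝ (Fin n)), IsCompact K → K ⊆ U →
      ∀ δ > (0 : ℝ), ∃ ε > (0 : ℝ),
        ∀ ξ ∈ K,
          DifferentiableAt ℝ
            (fun ζ : EuclideanSpace ℝ (Fin n) =>
              ⨅ η : EuclideanSpace ℝ (Fin n), (v η + ‖ζ - η‖ ^ 2 / (2 * ε))) ξ ∧
          ‖gradient
              (fun ζ : EuclideanSpace ℝ (Fin n) =>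
                ⨅ η : EuclideanSpace ℝ (Fin n), (v η + ‖ζ - η‖ ^ 2 / (2 * ε))) ξ -
            gradient v ξ‖ ≤ δ := by
  intro K hK hKU δ hδ
  obtain ⟨r, hr, hKr⟩ := hK.exists_cthickening_subset_open hU hKU
  obtain ⟨τ, hτ, hgrad_close⟩ := uniformContinuousOn_iff.mp
    (hK.cthickening.uniformContinuousOn_of_continuous (hgradcont.mono hKr)) δ hδ
  obtain ⟨ε, hε, hεL⟩ := exists_pos_mul_lt (lt_min hr hτ) (2 * L)
  refine ⟨ε, hε, fun ξ hξ => ?_⟩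
  have hball : closedBall ξ (2 * ε * L) ⊆ cthickening r K :=
    (closedBall_subset_cthickening hξ _).trans
      (cthickening_mono (by linarith [min_le_left r τ]) K)
  obtain ⟨x, hx, hgrad⟩ :=
    hconv.exists_hasGradientAt_moreauEnvelope hlip hε ξ fun y hy => hdiff y (hKr (hball hy))
  unfold moreauEnvelope at hgrad
  refine ⟨hgrad.differentiableAt, ?_⟩
  rw [hgrad.gradient, ← dist_eq_norm]
  refine (hgrad_close x (hball hx) ξ (hball (mem_closedBall_self (by positivity))) ?_).le
  linarith [mem_closedBall.mp hx, min_le_right r τ]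
end

section
/- Let m ≥ 1 and let v : ℝᵐ → ℝ be a smooth spacelike function (|Dv(x)| < 1 for all x) satisfying div( Dv/√(1 - |Dv|²) ) = m + 1 on ℝᵐ, and suppose v(x) - |x| → 0 as |x| → ∞. Then v(x) = √( (m/(m+1))² + |x|² ) for all x ∈ ℝᵐ. -/
open Filter Real

/-- The divergence of a vector field `W` on `ℝᵐ`: `div W x = Σᵢ ∂ᵢ Wᵢ (x)`. -/
noncomputable def divg (m : ℕ) (W : EuclideanSpace ℝ (Fin m) → EuclideanSpace ℝ (Fin m))
    (x : EuclideanSpace ℝ (Fin m)) : ℝ :=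
  ∑ i : Fin m, fderiv ℝ (fun z => W z i) x (EuclideanSpace.single i 1)

section Aux

variable {m : ℕ}
local notation "E" => EuclideanSpace ℝ (Fin m)

noncomputable def hyp (a : ℝ) (z : E) : ℝ := Real.sqrt (a ^ 2 + ‖z‖ ^ 2)

lemma toDual_eq_innerSL (p : E) : InnerProductSpace.toDual ℝ (EuclideanSpace ℝ (Fin m)) p = innerSL ℝ p := by
  ext y; simp [InnerProductSpace.toDual_apply_apply]

lemma hasGradientAt_hyper (a : ℝ) (ha : 0 < a) (x : E) :
    HasGradientAt (hyp a) ((Real.sqrt (a ^ 2 + ‖x‖ ^ 2))⁻¹ • x) x := by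
  have hs : 0 < a ^ 2 + ‖x‖ ^ 2 := by positivity
  have h1 : HasFDerivAt (fun z : E => a ^ 2 + ‖z‖ ^ 2)
      ((2:ℕ) • (innerSL ℝ x)) x := by
    simpa using ((hasFDerivAt_id x).norm_sq.const_add (a ^ 2))
  have h2 : HasDerivAt Real.sqrt (1 / (2 * Real.sqrt (a ^ 2 + ‖x‖ ^ 2))) (a ^ 2 + ‖x‖ ^ 2) :=
    Real.hasDerivAt_sqrt hs.ne'
  have h3 := h2.comp_hasFDerivAt x h1
  rw [hasGradientAt_iff_hasFDerivAt, toDual_eq_innerSL]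
  convert h3 using 1
  case e'_11 => rfl
  case e'_9 => ext y <;> simp
  ext y
  have hsq : Real.sqrt (a ^ 2 + ‖x‖ ^ 2) ≠ 0 := (Real.sqrt_pos.mpr hs).ne'
  simp [inner_smul_left, real_inner_comm]
  field_simp

lemma gradient_hyper (a : ℝ) (ha : 0 < a) (x : E) :
    gradient (hyp a) x = (Real.sqrt (a ^ 2 + ‖x‖ ^ 2))⁻¹ • x :=
  ((hasGradientAt_hyper a ha x).differentiableAt.hasGradientAt.unique (hasGradientAt_hyper a ha x))

lemma hyper_diff (a : ℝ) (ha : 0 < a) : Differentiable ℝ (hyp a : E → ℝ) :=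
  fun x => (hasGradientAt_hyper a ha x).differentiableAt

lemma sqrt_hyper_pos (a : ℝ) (ha : 0 < a) (x : E) : 0 < Real.sqrt (a ^ 2 + ‖x‖ ^ 2) :=
  Real.sqrt_pos.mpr (by positivity)

lemma norm_gradient_hyper_sq (a : ℝ) (ha : 0 < a) (x : E) :
    1 - ‖gradient (hyp a) x‖ ^ 2 = a ^ 2 / (a ^ 2 + ‖x‖ ^ 2) := by
  rw [gradient_hyper a ha x]
  have hs : 0 < a ^ 2 + ‖x‖ ^ 2 := by positivity
  rw [norm_smul]
  have : |(Real.sqrt (a ^ 2 + ‖x‖ ^ 2))⁻¹| = (Real.sqrt (a ^ 2 + ‖x‖ ^ 2))⁻¹ := by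
    exact abs_of_pos (by positivity)
  rw [Real.norm_eq_abs, this, mul_pow, inv_pow, Real.sq_sqrt hs.le]
  field_simp
  ring

lemma norm_gradient_hyper_lt (a : ℝ) (ha : 0 < a) (x : E) : ‖gradient (hyp a) x‖ < 1 := by
  nlinarith [norm_gradient_hyper_sq a ha x, div_pos (by positivity : (0:ℝ) < a^2)
    (by positivity : (0:ℝ) < a^2 + ‖x‖^2), norm_nonneg (gradient (hyp a) x)]

lemma W_hyper (a : ℝ) (ha : 0 < a) :
    (fun z : E => (Real.sqrt (1 - ‖gradient (hyp a) z‖ ^ 2))⁻¹ • gradient (hyp a) z)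
      = fun z : E => a⁻¹ • z := by
  funext z
  have hs : 0 < a ^ 2 + ‖z‖ ^ 2 := by positivity
  rw [norm_gradient_hyper_sq a ha z, gradient_hyper a ha z]
  rw [Real.sqrt_div' _ (by positivity), Real.sqrt_sq ha.le]
  rw [smul_smul]
  congr 1
  have h1 : Real.sqrt (a ^ 2 + ‖z‖ ^ 2) ≠ 0 := (sqrt_hyper_pos a ha z).ne'
  field_simp

lemma divg_linear (a : ℝ) (ha : 0 < a) (x : E) :
    divg m (fun z : E => a⁻¹ • z) x = m * a⁻¹ := by
  unfold divg
  have : ∀ i : Fin m, fderiv ℝ (fun z : E => (a⁻¹ • z) i) x (EuclideanSpace.single i 1) = a⁻¹ := by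
    intro i
    have h : (fun z : E => (a⁻¹ • z) i) = fun z : E => a⁻¹ • (EuclideanSpace.proj (𝕜 := ℝ) i) z := by
      funext z; simp
    rw [h]
    rw [fderiv_fun_const_smul ((EuclideanSpace.proj (𝕜 := ℝ) i).differentiableAt) a⁻¹]
    rw [(EuclideanSpace.proj (𝕜 := ℝ) i).fderiv]
    simp
  rw [Finset.sum_congr rfl (fun i _ => this i)]
  simp [mul_comm]

lemma eucl_decomp (y : E) : ∑ i : Fin m, y i • EuclideanSpace.single i (1:ℝ) = y := by
  have := (EuclideanSpace.basisFun (Fin m) ℝ).sum_repr y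
  simpa [EuclideanSpace.basisFun_apply, EuclideanSpace.basisFun_repr] using this

lemma divg_expand (f : E → ℝ) (x : E)
    (hg : DifferentiableAt ℝ (gradient f) x)
    (hp : ‖gradient f x‖ < 1) :
    divg m (fun z => (Real.sqrt (1 - ‖gradient f z‖ ^ 2))⁻¹ • gradient f z) x
      = (Real.sqrt (1 - ‖gradient f x‖ ^ 2))⁻¹ ^ 3 *
          (inner ℝ (gradient f x) (fderiv ℝ (gradient f) x (gradient f x)) : ℝ) +
        (Real.sqrt (1 - ‖gradient f x‖ ^ 2))⁻¹ *
          ∑ i : Fin m, (inner ℝ (EuclideanSpace.single i (1:ℝ))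
            (fderiv ℝ (gradient f) x (EuclideanSpace.single i (1:ℝ))) : ℝ) := by
  set g := gradient f with hgdef
  set p := g x with hpdef
  set H := fderiv ℝ g x with hHdef
  have hq0 : 0 < 1 - ‖p‖ ^ 2 := by nlinarith [norm_nonneg p]
  set σ : ℝ := (Real.sqrt (1 - ‖p‖ ^ 2))⁻¹ with hσdef
  have hsq : Real.sqrt (1 - ‖p‖ ^ 2) ≠ 0 := (Real.sqrt_pos.mpr hq0).ne'
  -- derivative of z ↦ 1 - ‖g z‖²
  have hq : HasFDerivAt (fun z : E => 1 - ‖g z‖ ^ 2)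
      (-((2:ℕ) • (innerSL ℝ p).comp H)) x := by
    simpa using (hg.hasFDerivAt.norm_sq).const_sub 1
  -- derivative of t ↦ (√t)⁻¹ at 1 - ‖p‖²
  have hinv : HasDerivAt (fun t : ℝ => (Real.sqrt t)⁻¹)
      (-(1 / (2 * Real.sqrt (1 - ‖p‖ ^ 2))) / (Real.sqrt (1 - ‖p‖ ^ 2)) ^ 2) (1 - ‖p‖ ^ 2) :=
    (Real.hasDerivAt_sqrt hq0.ne').inv hsq
  have hs : HasFDerivAt (fun z : E => (Real.sqrt (1 - ‖g z‖ ^ 2))⁻¹)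
      ((-(1 / (2 * Real.sqrt (1 - ‖p‖ ^ 2))) / (Real.sqrt (1 - ‖p‖ ^ 2)) ^ 2) •
        (-((2:ℕ) • (innerSL ℝ p).comp H))) x := hinv.comp_hasFDerivAt (h₂ := fun t : ℝ => (Real.sqrt t)⁻¹) x hq
  -- componentwise
  have hcomp : ∀ i : Fin m,
      fderiv ℝ (fun z : E => ((Real.sqrt (1 - ‖g z‖ ^ 2))⁻¹ • g z) i) x
        (EuclideanSpace.single i (1:ℝ))
      = σ * (H (EuclideanSpace.single i (1:ℝ))) i
        + p i * (σ ^ 3 * (inner ℝ p (H (EuclideanSpace.single i (1:ℝ))) : ℝ)) := by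
    intro i
    have hgi : HasFDerivAt (fun z : E => g z i)
        ((EuclideanSpace.proj (𝕜 := ℝ) i).comp H) x :=
      (EuclideanSpace.proj (𝕜 := ℝ) i).hasFDerivAt.comp x hg.hasFDerivAt
    have hWi := hs.fun_mul hgi
    have heq : (fun z : E => ((Real.sqrt (1 - ‖g z‖ ^ 2))⁻¹ • g z) i)
        = fun z : E => (Real.sqrt (1 - ‖g z‖ ^ 2))⁻¹ * g z i := by
      funext z; simp
    rw [heq, hWi.fderiv]
    have happ : ∀ e : E, ((-(1 / (2 * Real.sqrt (1 - ‖p‖ ^ 2))) / (Real.sqrt (1 - ‖p‖ ^ 2)) ^ 2) •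
        (-((2:ℕ) • (innerSL ℝ p).comp H))) e
        = (-(1 / (2 * Real.sqrt (1 - ‖p‖ ^ 2))) / (Real.sqrt (1 - ‖p‖ ^ 2)) ^ 2) *
          (-(2 * (inner ℝ p (H e) : ℝ))) := by
      intro e
      simp [two_smul]
      ring
    simp only [ContinuousLinearMap.add_apply, ContinuousLinearMap.smul_apply, happ,
      ContinuousLinearMap.comp_apply, smul_eq_mul]
    have hproj : ∀ e : E, (EuclideanSpace.proj (𝕜 := ℝ) i) (H e) = (H e) i := fun _ => rfl
    rw [hproj]
    rw [hσdef]
    have hgx : g x = p := rfl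
    rw [hgx]
    set s := Real.sqrt (1 - ‖p‖ ^ 2) with hsdef
    set c : ℝ := inner ℝ p (H (EuclideanSpace.single i (1:ℝ))) with hcdef
    have hspos : 0 < s := Real.sqrt_pos.mpr hq0
    field_simp
  unfold divg
  rw [Finset.sum_congr rfl (fun i _ => hcomp i)]
  rw [Finset.sum_add_distrib]
  have h1 : ∑ i : Fin m, σ * (H (EuclideanSpace.single i (1:ℝ))) i
      = σ * ∑ i : Fin m, (inner ℝ (EuclideanSpace.single i (1:ℝ))
          (H (EuclideanSpace.single i (1:ℝ))) : ℝ) := by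
    rw [Finset.mul_sum]
    refine Finset.sum_congr rfl fun i _ => ?_
    rw [EuclideanSpace.inner_single_left]
    simp
  have h2 : ∑ i : Fin m, p i * (σ ^ 3 * (inner ℝ p (H (EuclideanSpace.single i (1:ℝ))) : ℝ))
      = σ ^ 3 * (inner ℝ p (H p) : ℝ) := by
    have hHp : H p = ∑ i : Fin m, p i • H (EuclideanSpace.single i (1:ℝ)) := by
      conv_lhs => rw [← eucl_decomp p]
      rw [map_sum]
      exact Finset.sum_congr rfl fun i _ => by rw [map_smul]
    have : (inner ℝ p (H p) : ℝ)
        = ∑ i : Fin m, p i * (inner ℝ p (H (EuclideanSpace.single i (1:ℝ))) : ℝ) := by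
      rw [hHp, inner_sum]
      exact Finset.sum_congr rfl fun i _ => by rw [real_inner_smul_right]
    rw [this, Finset.mul_sum]
    refine Finset.sum_congr rfl fun i _ => by ring
  rw [h1, h2]
  ring

-- 1D second derivative test at a local max
lemma second_deriv_nonpos_of_isLocalMax {φ φ' : ℝ → ℝ} {c : ℝ}
    (hφ : ∀ t, HasDerivAt φ (φ' t) t) (h'' : HasDerivAt φ' c 0)
    (hmax : IsLocalMax φ 0) : c ≤ 0 := by
  by_contra hc
  push_neg at hc
  have h0 : φ' 0 = 0 := by
    have := hmax.deriv_eq_zero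
    rwa [(hφ 0).deriv] at this
  -- slope of φ' tends to c > 0
  have hslope : Tendsto (fun t => φ' t / t) (nhdsWithin 0 {(0:ℝ)}ᶜ) (nhds c) := by
    have := hasDerivAt_iff_tendsto_slope.mp h''
    have heq : (fun t => φ' t / t) = slope φ' 0 := by
      funext t; rw [slope_def_field, h0, sub_zero, sub_zero]
    rwa [heq]
  have hev : ∀ᶠ t in nhdsWithin 0 {(0:ℝ)}ᶜ, 0 < φ' t / t :=
    hslope.eventually (eventually_gt_nhds hc)
  rw [Filter.Eventually, Metric.mem_nhdsWithin_iff] at hev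
  obtain ⟨ε, hε, hball⟩ := hev
  obtain ⟨δ, hδ, hloc⟩ := Metric.eventually_nhds_iff.mp hmax
  set r := min ε δ with hr
  have hrpos : 0 < r := lt_min hε hδ
  have hpos : ∀ t ∈ Set.Ioo (0:ℝ) r, 0 < φ' t := by
    intro t ht
    have h1 : t ∈ Metric.ball (0:ℝ) ε ∩ {(0:ℝ)}ᶜ := by
      constructor
      · rw [Metric.mem_ball, Real.dist_eq, sub_zero, abs_of_pos ht.1]
        exact ht.2.trans_le (min_le_left _ _)
      · simpa using ht.1.ne'
    have h2 : (0:ℝ) < φ' t / t := hball h1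
    exact (div_pos_iff.mp h2).resolve_right (fun h => absurd ht.1 (not_lt.mpr h.2.le)) |>.1
  have hmono : StrictMonoOn φ (Set.Icc 0 r) := by
    apply strictMonoOn_of_deriv_pos (convex_Icc 0 r)
    · exact fun t _ => (hφ t).differentiableAt.continuousAt.continuousWithinAt
    · intro t ht
      rw [interior_Icc] at ht
      rw [(hφ t).deriv]
      exact hpos t ⟨ht.1, ht.2⟩
  have h1 : φ 0 < φ (r/2) :=
    hmono (Set.mem_Icc.mpr ⟨le_refl 0, hrpos.le⟩)
      (Set.mem_Icc.mpr ⟨by linarith, by linarith⟩) (by linarith)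
  have h2 : φ (r/2) ≤ φ 0 := hloc (by
    rw [Real.dist_eq, sub_zero, abs_of_pos (by linarith)]
    have : r ≤ δ := min_le_right _ _
    linarith)
  linarith

lemma fderiv_apply_eq_inner_gradient (f : E → ℝ) (x e : E) :
    fderiv ℝ f x e = (inner ℝ (gradient f x) e : ℝ) := by
  rw [gradient]
  rw [← InnerProductSpace.toDual_apply_apply, LinearIsometryEquiv.apply_symm_apply]

lemma hessian_dir_nonpos (f : E → ℝ) (x₀ : E)
    (hd : Differentiable ℝ f)
    (hg : DifferentiableAt ℝ (gradient f) x₀)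
    (hmax : IsLocalMax f x₀) (e : E) :
    (inner ℝ (fderiv ℝ (gradient f) x₀ e) e : ℝ) ≤ 0 := by
  set ψ : ℝ → E := fun t => x₀ + t • e with hψdef
  have hψ0 : ψ 0 = x₀ := by simp [hψdef]
  have hψ : ∀ t, HasDerivAt ψ e t := by
    intro t
    simpa [hψdef] using ((hasDerivAt_id t).smul_const e).const_add x₀
  set φ : ℝ → ℝ := fun t => f (ψ t) with hφdef
  set φ' : ℝ → ℝ := fun t => (inner ℝ (gradient f (ψ t)) e : ℝ) with hφ'def
  have hφ : ∀ t, HasDerivAt φ (φ' t) t := by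
    intro t
    have h1 := ((hd (ψ t)).hasFDerivAt.comp_hasDerivAt t (hψ t))
    rwa [fderiv_apply_eq_inner_gradient] at h1
  have hu : HasDerivAt (fun t => gradient f (ψ t)) (fderiv ℝ (gradient f) x₀ e) 0 := by
    have hg' : HasFDerivAt (gradient f) (fderiv ℝ (gradient f) x₀) (ψ 0) := by
      rw [hψ0]; exact hg.hasFDerivAt
    exact hg'.comp_hasDerivAt 0 (hψ 0)
  have h'' : HasDerivAt φ' ((inner ℝ (fderiv ℝ (gradient f) x₀ e) e : ℝ)) 0 := by
    have := hu.inner ℝ (hasDerivAt_const (0:ℝ) e)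
    simpa [hψ0, hφ'def] using this
  have hmaxφ : IsLocalMax φ 0 := by
    have : Tendsto ψ (nhds 0) (nhds x₀) := by
      rw [← hψ0]; exact (hψ 0).continuousAt
    have hmax' : IsMaxFilter f (nhds (ψ 0)) (ψ 0) := by rw [hψ0]; exact hmax
    have h := hmax'.comp_tendsto (by rwa [hψ0] : Tendsto ψ (nhds 0) (nhds (ψ 0)))
    exact h
  exact second_deriv_nonpos_of_isLocalMax hφ h'' hmaxφ

lemma gradient_sub' (f g : E → ℝ) (z : E) (hf : DifferentiableAt ℝ f z)
    (hg : DifferentiableAt ℝ g z) :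
    gradient (fun y => f y - g y) z = gradient f z - gradient g z := by
  rw [gradient, gradient, gradient, fderiv_fun_sub hf hg, map_sub]

lemma divg_comparison (f g : E → ℝ) (x₀ : E)
    (hdf : Differentiable ℝ f) (hdg : Differentiable ℝ g)
    (hgf : DifferentiableAt ℝ (gradient f) x₀) (hgg : DifferentiableAt ℝ (gradient g) x₀)
    (hp : ‖gradient f x₀‖ < 1)
    (hmax : IsLocalMax (fun z => f z - g z) x₀) :
    divg m (fun z => (Real.sqrt (1 - ‖gradient f z‖ ^ 2))⁻¹ • gradient f z) x₀
      ≤ divg m (fun z => (Real.sqrt (1 - ‖gradient g z‖ ^ 2))⁻¹ • gradient g z) x₀ := by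
  set w : E → ℝ := fun z => f z - g z with hwdef
  have hdw : Differentiable ℝ w := hdf.sub hdg
  have hgw : ∀ z, gradient w z = gradient f z - gradient g z :=
    fun z => gradient_sub' f g z (hdf z) (hdg z)
  have hgweq : gradient w = fun z => gradient f z - gradient g z := funext hgw
  -- gradient of w vanishes at x₀
  have hw0 : gradient w x₀ = 0 := by
    rw [gradient, hmax.fderiv_eq_zero, map_zero]
  have hpg : gradient g x₀ = gradient f x₀ := by
    have := hgw x₀
    rw [hw0] at this
    have h2 : gradient f x₀ - gradient g x₀ = 0 := this.symm
    rw [sub_eq_zero] at h2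
    exact h2.symm
  -- Hessian difference
  have hHw : fderiv ℝ (gradient w) x₀ = fderiv ℝ (gradient f) x₀ - fderiv ℝ (gradient g) x₀ := by
    rw [hgweq, fderiv_fun_sub hgf hgg]
  have hkey : ∀ e : E, (inner ℝ ((fderiv ℝ (gradient f) x₀ - fderiv ℝ (gradient g) x₀) e) e : ℝ) ≤ 0 := by
    intro e
    have h := hessian_dir_nonpos w x₀ hdw (by rw [hgweq]; exact hgf.sub hgg) hmax e
    rwa [hHw] at h
  have hpg' : ‖gradient g x₀‖ < 1 := by rw [hpg]; exact hp
  rw [divg_expand f x₀ hgf hp, divg_expand g x₀ hgg hpg', hpg]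
  set p := gradient f x₀ with hpdef
  set Hf := fderiv ℝ (gradient f) x₀
  set Hg := fderiv ℝ (gradient g) x₀
  set σ : ℝ := (Real.sqrt (1 - ‖p‖ ^ 2))⁻¹ with hσdef
  have hσ0 : 0 ≤ σ := by positivity
  have h1 : (inner ℝ p (Hf p) : ℝ) ≤ (inner ℝ p (Hg p) : ℝ) := by
    have := hkey p
    rw [ContinuousLinearMap.sub_apply, inner_sub_left] at this
    rw [real_inner_comm (Hf p) p, real_inner_comm (Hg p) p]
    linarith
  have h2 : ∀ i : Fin m, (inner ℝ (EuclideanSpace.single i (1:ℝ)) (Hf (EuclideanSpace.single i (1:ℝ))) : ℝ)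
      ≤ (inner ℝ (EuclideanSpace.single i (1:ℝ)) (Hg (EuclideanSpace.single i (1:ℝ))) : ℝ) := by
    intro i
    have := hkey (EuclideanSpace.single i (1:ℝ))
    rw [ContinuousLinearMap.sub_apply, inner_sub_left] at this
    rw [real_inner_comm (Hf _) _, real_inner_comm (Hg _) _]
    linarith
  have hsum : ∑ i : Fin m, (inner ℝ (EuclideanSpace.single i (1:ℝ)) (Hf (EuclideanSpace.single i (1:ℝ))) : ℝ)
      ≤ ∑ i : Fin m, (inner ℝ (EuclideanSpace.single i (1:ℝ)) (Hg (EuclideanSpace.single i (1:ℝ))) : ℝ) :=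
    Finset.sum_le_sum fun i _ => h2 i
  have hσ3 : (0:ℝ) ≤ σ ^ 3 := by positivity
  nlinarith [mul_le_mul_of_nonneg_left h1 hσ3, mul_le_mul_of_nonneg_left hsum hσ0]



lemma gradient_hyp_diff (a : ℝ) (ha : 0 < a) :
    Differentiable ℝ (gradient (hyp a) : E → E) := by
  have heq : (gradient (hyp a) : E → E) = fun z => (Real.sqrt (a ^ 2 + ‖z‖ ^ 2))⁻¹ • z :=
    funext (gradient_hyper a ha)
  rw [heq]
  intro z
  have hs : 0 < a ^ 2 + ‖z‖ ^ 2 := by positivity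
  have d1 : DifferentiableAt ℝ (fun z : E => a ^ 2 + ‖z‖ ^ 2) z :=
    (differentiableAt_const _).add ((contDiff_norm_sq (𝕜 := ℝ) (n := 1)).differentiable one_ne_zero z)
  have d2 : DifferentiableAt ℝ (fun z : E => Real.sqrt (a ^ 2 + ‖z‖ ^ 2)) z :=
    d1.sqrt hs.ne'
  have d3 : DifferentiableAt ℝ (fun z : E => (Real.sqrt (a ^ 2 + ‖z‖ ^ 2))⁻¹) z :=
    d2.inv (Real.sqrt_pos.mpr hs).ne'
  exact d3.smul differentiableAt_id

lemma gradient_v_diff (v : E → ℝ) (hsm : ContDiff ℝ (⊤ : ℕ∞) v) :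
    Differentiable ℝ (gradient v : E → E) := by
  have h1 : Differentiable ℝ (fderiv ℝ v) := (hsm.fderiv_right (m := 1) (by exact WithTop.coe_le_coe.mpr le_top)).differentiable one_ne_zero
  have h2 : Differentiable ℝ (fun x : E =>
      (InnerProductSpace.toDual ℝ (EuclideanSpace ℝ (Fin m))).symm (fderiv ℝ v x)) :=
    fun x => ((InnerProductSpace.toDual ℝ
      (EuclideanSpace ℝ (Fin m))).symm.toContinuousLinearEquiv.toContinuousLinearMap.differentiable
        ((fderiv ℝ v x))).comp x (h1 x)
  exact h2

lemma hyp_sub_norm_tendsto (a : ℝ) (ha : 0 < a) :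
    Tendsto (fun x : E => hyp a x - ‖x‖) (Bornology.cobounded E) (nhds 0) := by
  have key : ∀ x : E, hyp a x - ‖x‖ = a ^ 2 / (Real.sqrt (a ^ 2 + ‖x‖ ^ 2) + ‖x‖) := by
    intro x
    have hs : 0 < a ^ 2 + ‖x‖ ^ 2 := by positivity
    have hden : 0 < Real.sqrt (a ^ 2 + ‖x‖ ^ 2) + ‖x‖ := by
      have := Real.sqrt_pos.mpr hs
      linarith [norm_nonneg x]
    rw [eq_div_iff hden.ne', hyp]
    have := Real.sq_sqrt hs.le
    nlinarith [this]
  have h1 : Tendsto (fun r : ℝ => a ^ 2 / (Real.sqrt (a ^ 2 + r ^ 2) + r)) atTop (nhds 0) := by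
    apply Filter.Tendsto.div_atTop tendsto_const_nhds
    apply tendsto_atTop_mono (fun r => ?_) tendsto_id
    have : 0 ≤ Real.sqrt (a ^ 2 + r ^ 2) := Real.sqrt_nonneg _
    simp only [id]
    linarith
  have h2 := h1.comp (tendsto_norm_cobounded_atTop : Tendsto (fun x : E => ‖x‖) (Bornology.cobounded _) atTop)
  convert h2 using 1
  funext x
  exact key x

lemma exists_global_max (w : E → ℝ) (hw : Continuous w)
    (h0 : Tendsto w (Bornology.cobounded E) (nhds 0))
    (x : E) (hx : 0 < w x) : ∃ x₀, ∀ y, w y ≤ w x₀ := by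
  rw [Metric.cobounded_eq_cocompact] at h0
  exact hw.exists_forall_ge' x ((h0.eventually (gt_mem_nhds hx)).mono fun y hy => hy.le)

end Aux

section Main

variable {m : ℕ}
local notation "E" => EuclideanSpace ℝ (Fin m)

/-- Rigidity of the hyperboloid: an entire smooth spacelike solution of
`div(Dv/√(1-|Dv|²)) = m + 1` on `ℝᵐ` with `v(x) - |x| → 0` as `|x| → ∞` is the
hyperboloid `√((m/(m+1))² + |x|²)`. -/
theorem cmc_hyperboloid_rigidity (m : ℕ) (hm : 1 ≤ m)
    (v : EuclideanSpace ℝ (Fin m) → ℝ)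
    (hsm : ContDiff ℝ (⊤ : ℕ∞) v)
    (hsp : ∀ x : EuclideanSpace ℝ (Fin m), ‖gradient v x‖ < 1)
    (hmc : ∀ x : EuclideanSpace ℝ (Fin m),
      divg m (fun z => (Real.sqrt (1 - ‖gradient v z‖ ^ 2))⁻¹ • gradient v z) x = m + 1)
    (hasym : Tendsto (fun x : EuclideanSpace ℝ (Fin m) => v x - ‖x‖)
      (Bornology.cobounded (EuclideanSpace ℝ (Fin m))) (nhds 0)) :
    ∀ x : EuclideanSpace ℝ (Fin m),
      v x = Real.sqrt (((m : ℝ) / (m + 1)) ^ 2 + ‖x‖ ^ 2) := by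
  intro x
  set a₀ : ℝ := (m : ℝ) / (m + 1) with ha₀def
  have hm1 : (1:ℝ) ≤ (m:ℝ) := by exact_mod_cast hm
  have hm1pos : (0:ℝ) < (m:ℝ) + 1 := by linarith
  have ha₀pos : 0 < a₀ := div_pos (by linarith) hm1pos
  have hdv : Differentiable ℝ v := hsm.differentiable (by simp)
  have hgv : Differentiable ℝ (gradient v) := gradient_v_diff v hsm
  -- divergence of the hyperboloid vector field
  have hdivhyp : ∀ a : ℝ, 0 < a → ∀ y : EuclideanSpace ℝ (Fin m),
      divg m (fun z => (Real.sqrt (1 - ‖gradient (hyp a) z‖ ^ 2))⁻¹ • gradient (hyp a) z) y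
        = m * a⁻¹ := by
    intro a ha y
    rw [W_hyper a ha]
    exact divg_linear a ha y
  -- Step A : upper barrier
  have stepA : ∀ a : ℝ, a₀ < a → ∀ y : EuclideanSpace ℝ (Fin m), v y ≤ hyp a y := by
    intro a ha y
    by_contra hlt
    push_neg at hlt
    have hapos : 0 < a := ha₀pos.trans ha
    set w : EuclideanSpace ℝ (Fin m) → ℝ := fun z => v z - hyp a z with hwdef
    have hwc : Continuous w := (hdv.continuous).sub (hyper_diff a hapos).continuous
    have hw0 : Tendsto w (Bornology.cobounded (EuclideanSpace ℝ (Fin m))) (nhds 0) := by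
      have := hasym.sub (hyp_sub_norm_tendsto a hapos)
      simp only [sub_zero] at this
      convert this using 2 with z
      ring
    obtain ⟨x₀, hx₀⟩ := exists_global_max w hwc hw0 y (by simp [hwdef]; linarith)
    have hlocmax : IsLocalMax w x₀ := Filter.Eventually.of_forall hx₀
    have hcomp := divg_comparison v (hyp a) x₀ hdv (hyper_diff a hapos)
      (hgv x₀) (gradient_hyp_diff a hapos x₀) (hsp x₀) hlocmax
    rw [hmc x₀, hdivhyp a hapos x₀] at hcomp
    have harith : (m:ℝ) * a⁻¹ < (m:ℝ) + 1 := by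
      rw [mul_inv_lt_iff₀ hapos]
      have := (div_lt_iff₀ hm1pos).mp ha
      nlinarith
    linarith
  -- Step B : lower barrier
  have stepB : ∀ a : ℝ, 0 < a → a < a₀ → ∀ y : EuclideanSpace ℝ (Fin m), hyp a y ≤ v y := by
    intro a hapos ha y
    by_contra hlt
    push_neg at hlt
    set w : EuclideanSpace ℝ (Fin m) → ℝ := fun z => hyp a z - v z with hwdef
    have hwc : Continuous w := (hyper_diff a hapos).continuous.sub hdv.continuous
    have hw0 : Tendsto w (Bornology.cobounded (EuclideanSpace ℝ (Fin m))) (nhds 0) := by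
      have := (hyp_sub_norm_tendsto a hapos).sub hasym
      simp only [sub_zero] at this
      convert this using 2 with z
      ring
    obtain ⟨x₀, hx₀⟩ := exists_global_max w hwc hw0 y (by simp [hwdef]; linarith)
    have hlocmax : IsLocalMax w x₀ := Filter.Eventually.of_forall hx₀
    have hcomp := divg_comparison (hyp a) v x₀ (hyper_diff a hapos) hdv
      (gradient_hyp_diff a hapos x₀) (hgv x₀) (norm_gradient_hyper_lt a hapos x₀) hlocmax
    rw [hmc x₀, hdivhyp a hapos x₀] at hcomp
    have harith : (m:ℝ) + 1 < (m:ℝ) * a⁻¹ := by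
      rw [lt_mul_inv_iff₀ hapos]
      have := (lt_div_iff₀ hm1pos).mp ha
      nlinarith
    linarith
  -- Step C : take limits
  have hcont : Tendsto (fun a : ℝ => Real.sqrt (a ^ 2 + ‖x‖ ^ 2)) (nhds a₀)
      (nhds (Real.sqrt (a₀ ^ 2 + ‖x‖ ^ 2))) := by
    apply (Real.continuous_sqrt.tendsto _).comp
    exact ((continuous_pow 2).add continuous_const).tendsto a₀
  have hupper : v x ≤ Real.sqrt (a₀ ^ 2 + ‖x‖ ^ 2) := by
    refine ge_of_tendsto (hcont.mono_left nhdsWithin_le_nhds : Tendsto _ (nhdsWithin a₀ (Set.Ioi a₀)) _) ?_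
    filter_upwards [self_mem_nhdsWithin] with a ha
    exact stepA a ha x
  have hlower : Real.sqrt (a₀ ^ 2 + ‖x‖ ^ 2) ≤ v x := by
    refine le_of_tendsto (hcont.mono_left nhdsWithin_le_nhds : Tendsto _ (nhdsWithin a₀ (Set.Iio a₀)) _) ?_
    have hIoo : Set.Ioo (0:ℝ) a₀ ∈ nhdsWithin a₀ (Set.Iio a₀) :=
      Ioo_mem_nhdsLT_of_mem ⟨ha₀pos, le_refl a₀⟩
    filter_upwards [hIoo] with a ha
    exact stepB a ha.1 ha.2 x
  exact le_antisymm hupper hlower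

end Main
end
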